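/- arXiv:0802.0841 — 6 statements merged into one kernel-verified Lean document; each statement's English description precedes it below -/
import Mathlib

section
/- Let a ∈ R be a power series such that a(x₁,0,…,0) ≠ 0 in k[[x₁]], and let r be the order of a(x₁,0,…,0) in k[[x₁]] (the least exponent with nonzero coefficient). Then there exists an invertible power series w ∈ R such that I_a ∼ I_{r,w}. Moreover, if s ≥ 2t−1, then w may be chosen to be an invertible power series in k[[x₁]] only (i.e. w ∈ k[[x₁]] with nonzero constant term). -/
noncomputable section

open MvPowerSeries

/-- The maximal ideal `(x₁, …, x_h)` of the power series ring. -/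
def nIdeal (k : Type*) [Field k] (h : ℕ) : Ideal (MvPowerSeries (Fin h) k) :=
  Ideal.span (Set.range (X : Fin h → MvPowerSeries (Fin h) k))

/-- The ideal generated (in terms of a system of generators `y`) by
`y i * y j` (`i < j`, `(i,j) ≠ (0,1)`), `y j ^ 2 - y 0 ^ s` (`j ≥ 2`),
`y 1 ^ 2 - y 0 ^ (p+1) * y 1 - w * y 0 ^ (s - t + 1)` and `y 0 ^ t * y 1`. -/
def Iy (k : Type*) [Field k] (n s t p : ℕ) (w : MvPowerSeries (Fin (n + 2)) k)
    (y : Fin (n + 2) → MvPowerSeries (Fin (n + 2)) k) :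
    Ideal (MvPowerSeries (Fin (n + 2)) k) :=
  Ideal.span
    ({f | ∃ i j : Fin (n + 2), i < j ∧ (i, j) ≠ (0, 1) ∧ f = y i * y j} ∪
     {f | ∃ j : Fin (n + 2), 2 ≤ (j : ℕ) ∧ f = y j ^ 2 - y 0 ^ s} ∪
     {y 1 ^ 2 - y 0 ^ (p + 1) * y 1 - w * y 0 ^ (s - t + 1), y 0 ^ t * y 1})

/-- The ideal `I_{p,z}`. -/
def Ipz (k : Type*) [Field k] (n s t p : ℕ) (z : MvPowerSeries (Fin (n + 2)) k) :
    Ideal (MvPowerSeries (Fin (n + 2)) k) :=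
  Iy k n s t p z X

/-- The ideal `I_a`. -/
def Ia (k : Type*) [Field k] (n s t : ℕ) (a : MvPowerSeries (Fin (n + 2)) k) :
    Ideal (MvPowerSeries (Fin (n + 2)) k) :=
  Ideal.span
    ({f | ∃ i j : Fin (n + 2), i < j ∧ (i, j) ≠ (0, 1) ∧ f = X i * X j} ∪
     {f | ∃ j : Fin (n + 2), 2 ≤ (j : ℕ) ∧ f = X j ^ 2 - X 0 ^ s} ∪
     {X 1 ^ 2 - a * X 0 * X 1 - X 0 ^ (s - t + 1), X 0 ^ t * X 1})

/-- Two ideals are isomorphic iff the quotient `k`-algebras are isomorphic. -/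
def IdealIso (k : Type*) [Field k] {h : ℕ} (I J : Ideal (MvPowerSeries (Fin h) k)) : Prop :=
  Nonempty ((MvPowerSeries (Fin h) k ⧸ I) ≃ₐ[k] (MvPowerSeries (Fin h) k ⧸ J))

/-- The ideal `(x₂, …, x_h)`. -/
def offIdeal (k : Type*) [Field k] (n : ℕ) : Ideal (MvPowerSeries (Fin (n + 2)) k) :=
  Ideal.span {f | ∃ i : Fin (n + 2), i ≠ 0 ∧ f = X i}

end

/-!
The paper's variables `x₁, x₂, …, x_h` are `X 0, X 1, …, X (n + 1)`.

Write `a = ε x₁^r + c x₂ + d` with `ε` a unit and `d ∈ (x₃, …, x_h)`. Since `d x₁ x₂` lies in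
the ideal of the monomials `x_i x_j`, it can be dropped, and then the generator
`x₂² - a x₁ x₂ - x₁^{s-t+1}` becomes `(1 - c x₁) x₂² - ε x₁^{r+1} x₂ - x₁^{s-t+1}`. The
substitution `x₂ ↦ v x₂` with `v = (1 - c x₁) / ε` multiplies every other generator by a unit,
and it sends `x₂² - x₁^{r+1} x₂ - w x₁^{s-t+1}` to `v / ε` times that generator when `w` is the
preimage of `v / ε`. The substitution is an automorphism because its effect on coefficients is
triangular with unit diagonal. If `s ≥ 2t - 1`, then `x₁^{s-t+1} (x₂, …, x_h)` lies in the
ideal, so `w` may be replaced by `w(x₁, 0, …, 0)`.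
-/
namespace Ideal

variable {R : Type*} [CommRing R]

theorem mul_mem_of_mem_span {S : Set R} {I : Ideal R} {f y : R} (hf : f ∈ span S)
    (h : ∀ g ∈ S, g * y ∈ I) : f * y ∈ I := by
  induction hf using Submodule.span_induction with
  | mem g hg => exact h g hg
  | zero => rw [zero_mul]; exact I.zero_mem
  | add x z _ _ hx hz => rw [add_mul]; exact add_mem hx hz
  | smul c x _ hx => rw [smul_eq_mul, mul_assoc]; exact I.mul_mem_left c hx

theorem span_insert_eq_span_insert_of_sub_mem {S : Set R} {x y : R} (h : x - y ∈ span S) :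
    span (insert x S) = span (insert y S) := by
  have key {x y : R} (h : x - y ∈ span S) : span (insert x S) ≤ span (insert y S) :=
    span_le.2 <| Set.insert_subset
      (sub_add_cancel x y ▸ add_mem (span_mono (Set.subset_insert _ _) h)
        (subset_span (Set.mem_insert _ _)))
      ((Set.subset_insert _ _).trans subset_span)
  exact le_antisymm (key h) (key (neg_sub x y ▸ neg_mem h))

theorem span_insert_unit_mul {S : Set R} {u : R} (hu : IsUnit u) (x : R) :
    span (insert (u * x) S) = span (insert x S) := by
  rw [span_insert, span_insert, span_singleton_mul_left_unit hu]

theorem span_image_eq_of_associated {f : R → R} {S : Set R} (h : ∀ x ∈ S, Associated (f x) x) :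
    span (f '' S) = span S := by
  refine le_antisymm (span_le.2 ?_) (span_le.2 fun x hx => ?_)
  · rintro _ ⟨x, hx, rfl⟩
    obtain ⟨u, hu⟩ := (h x hx).symm
    exact hu ▸ mul_mem_right _ _ (subset_span hx)
  · obtain ⟨u, hu⟩ := h x hx
    exact hu ▸ mul_mem_right _ _ (subset_span ⟨x, hx, rfl⟩)

theorem map_span_insert_of_associated {F : Type*} [FunLike F R R] [RingHomClass F R R] (f : F)
    {S : Set R} (hS : ∀ x ∈ S, Associated (f x) x) (q : R) :
    (span (insert q S)).map f = span (insert (f q) S) := by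
  rw [map_span, Set.image_insert_eq, span_insert, span_insert, span_image_eq_of_associated hS]

end Ideal

namespace MvPowerSeries

section Substitution

variable {σ R : Type*} [CommRing R] [DecidableEq σ]

theorem hasSubst_mulSingle_mul_X (i : σ) (v : MvPowerSeries σ R) :
    HasSubst (Pi.mulSingle i v * X : σ → MvPowerSeries σ R) :=
  HasSubst.X.mul_left _

/-- The substitution `X i ↦ v * X i`, fixing the other variables. -/
noncomputable def scaleX (i : σ) (v : MvPowerSeries σ R) :
    MvPowerSeries σ R →ₐ[R] MvPowerSeries σ R :=
  substAlgHom (hasSubst_mulSingle_mul_X i v)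

theorem scaleX_X (i : σ) (v : MvPowerSeries σ R) (s : σ) :
    scaleX i v (X s) = (Pi.mulSingle i v : σ → MvPowerSeries σ R) s * X s :=
  substAlgHom_X _ s

theorem prod_mulSingle_mul_X_pow (i : σ) (v : MvPowerSeries σ R) (d : σ →₀ ℕ) :
    (d.prod fun s e => ((Pi.mulSingle i v * X : σ → MvPowerSeries σ R) s) ^ e) =
      v ^ d i * monomial d 1 := by
  simp only [Pi.mul_apply, mul_pow, Finsupp.prod_mul, monomial_one_eq]
  congr 1
  rw [Finsupp.prod, Finset.prod_eq_single i]
  · simp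
  · intro s _ hs
    simp [Pi.mulSingle_eq_of_ne hs]
  · intro hi
    simp [Finsupp.notMem_support_iff.1 hi]

theorem coeff_scaleX (i : σ) (v f : MvPowerSeries σ R) (e : σ →₀ ℕ) :
    coeff e (scaleX i v f) = ∑ d ∈ Finset.Iic e, coeff d f * coeff (e - d) (v ^ d i) := by
  rw [scaleX, substAlgHom_apply, coeff_subst (hasSubst_mulSingle_mul_X i v)]
  simp only [prod_mulSingle_mul_X_pow, coeff_mul_monomial, mul_one, smul_eq_mul, mul_ite, mul_zero]
  rw [finsum_eq_sum_of_support_subset _ (s := Finset.Iic e)]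
  · exact Finset.sum_congr rfl fun d hd => if_pos (Finset.mem_Iic.1 hd)
  · intro d hd
    simp only [Function.mem_support, ne_eq, ite_eq_right_iff, Classical.not_imp] at hd
    simpa using hd.1

theorem coeff_scaleX_of_forall_lt (i : σ) (v : MvPowerSeries σ R) {f : MvPowerSeries σ R}
    {e : σ →₀ ℕ} (hf : ∀ d < e, coeff d f = 0) :
    coeff e (scaleX i v f) = coeff e f * constantCoeff v ^ e i := by
  rw [coeff_scaleX, Finset.sum_eq_single_of_mem e (Finset.mem_Iic.2 le_rfl)]
  · rw [tsub_self, coeff_zero_eq_constantCoeff_apply, map_pow]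
  · intro d hd hde
    rw [hf d (lt_of_le_of_ne (Finset.mem_Iic.1 hd) hde), zero_mul]

variable {i : σ} {v : MvPowerSeries σ R}

theorem scaleX_injective (hv : IsUnit (constantCoeff v)) : Function.Injective (scaleX i v) := by
  refine (injective_iff_map_eq_zero _).2 fun f hf => ?_
  ext e
  induction e using WellFoundedLT.induction with
  | ind e ih =>
    have h := coeff_scaleX_of_forall_lt i v ih
    rw [hf, map_zero] at h
    rw [map_zero]
    exact ((hv.pow (e i)).mul_left_eq_zero).1 h.symm

/-- For `u` the inverse of `constantCoeff v`, the preimage of `g` under `scaleX i v`, built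
coefficient by coefficient by well-founded recursion on monomials. -/
noncomputable def scaleXPreimage (i : σ) (v g : MvPowerSeries σ R) (u : R) :
    MvPowerSeries σ R :=
  wellFounded_lt.fix fun e F =>
    u ^ e i * (coeff e g - ∑ d ∈ (Finset.Iio e).attach,
      F d (Finset.mem_Iio.1 d.2) * coeff (e - d.1) (v ^ d.1 i))

theorem coeff_scaleXPreimage (i : σ) (v g : MvPowerSeries σ R) (u : R) (e : σ →₀ ℕ) :
    coeff e (scaleXPreimage i v g u) = u ^ e i * (coeff e g -
      ∑ d ∈ Finset.Iio e, coeff d (scaleXPreimage i v g u) * coeff (e - d) (v ^ d i)) := by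
  conv_lhs => rw [coeff_apply, scaleXPreimage, WellFounded.fix_eq]
  exact congrArg (fun x => u ^ e i * (coeff e g - x)) <| Finset.sum_attach (Finset.Iio e)
    fun d => coeff d (scaleXPreimage i v g u) * coeff (e - d) (v ^ d i)

theorem scaleX_surjective (hv : IsUnit (constantCoeff v)) : Function.Surjective (scaleX i v) := by
  intro g
  refine ⟨scaleXPreimage i v g ↑hv.unit⁻¹, ?_⟩
  ext e
  rw [coeff_scaleX, ← Finset.Iio_insert, Finset.sum_insert Finset.notMem_Iio_self,
    coeff_scaleXPreimage, tsub_self, coeff_zero_eq_constantCoeff_apply, map_pow, mul_comm,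
    ← mul_assoc, ← mul_pow, IsUnit.mul_val_inv, one_pow, one_mul, sub_add_cancel]

noncomputable def scaleXEquiv (hv : IsUnit (constantCoeff v)) :
    MvPowerSeries σ R ≃ₐ[R] MvPowerSeries σ R :=
  AlgEquiv.ofBijective (scaleX i v) ⟨scaleX_injective hv, scaleX_surjective hv⟩

theorem scaleX_X_of_ne {s : σ} (hs : s ≠ i) : scaleX i v (X s) = X s := by
  rw [scaleX_X, Pi.mulSingle_eq_of_ne hs, one_mul]

theorem associated_scaleX_X (hv : IsUnit v) (s : σ) : Associated (scaleX i v (X s)) (X s) := by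
  rw [scaleX_X]
  refine associated_unit_mul_left _ _ ?_
  rcases eq_or_ne s i with rfl | hs
  · rwa [Pi.mulSingle_eq_same]
  · rw [Pi.mulSingle_eq_of_ne hs]
    exact isUnit_one

end Substitution

section Restriction

variable {σ R : Type*} [CommRing R]

theorem mem_span_X_image_of_coeff_eq_zero (s : Finset σ) {f : MvPowerSeries σ R}
    (hf : ∀ m : σ →₀ ℕ, (∀ j ∈ s, m j = 0) → coeff m f = 0) :
    f ∈ Ideal.span (X '' (s : Set σ)) := by
  classical
  induction s using Finset.induction generalizing f with
  | empty =>
    convert Ideal.zero_mem _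
    ext m
    exact hf m (by simp)
  | insert j s _ ih =>
    set f₀ := weightedHomogeneousComponent (Pi.single j 1) 0 f
    have hcoeff (m : σ →₀ ℕ) : coeff m f₀ = if m j = 0 then coeff m f else 0 := by
      rw [coeff_weightedHomogeneousComponent, Finsupp.weight_single_one_apply]
    obtain ⟨q, hq⟩ : X j ∣ f - f₀ := X_dvd_iff.2 fun m hm => by
      rw [map_sub, hcoeff, if_pos hm, sub_self]
    have hf₀ : f₀ ∈ Ideal.span (X '' (s : Set σ)) := ih fun m hm => by
      rw [hcoeff]
      split_ifs with hj
      · exact hf m (by simpa [hj] using hm)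
      · rfl
    rw [← sub_add_cancel f f₀, hq, Finset.coe_insert, Set.image_insert_eq]
    exact add_mem (Ideal.mul_mem_right _ _ (Ideal.subset_span (Set.mem_insert _ _)))
      (Ideal.span_mono (Set.subset_insert _ _) hf₀)

open scoped Classical in
/-- The power series `f(0, …, 0, X i, 0, …, 0)`. -/
noncomputable def restrictX (i : σ) (f : MvPowerSeries σ R) : MvPowerSeries σ R :=
  fun m => if ∀ j ≠ i, m j = 0 then coeff m f else 0

open scoped Classical in
theorem coeff_restrictX (i : σ) (f : MvPowerSeries σ R) (m : σ →₀ ℕ) :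
    coeff m (restrictX i f) = if ∀ j ≠ i, m j = 0 then coeff m f else 0 :=
  rfl

variable {i : σ} {f : MvPowerSeries σ R}

theorem coeff_restrictX_of_ne_zero {m : σ →₀ ℕ} (hm : ∃ j ≠ i, m j ≠ 0) :
    coeff m (restrictX i f) = 0 := by
  rw [coeff_restrictX, if_neg (by simpa using hm)]

theorem coeff_single_restrictX (l : ℕ) :
    coeff (Finsupp.single i l) (restrictX i f) = coeff (Finsupp.single i l) f := by
  classical
  rw [coeff_restrictX, if_pos fun j hj => Finsupp.single_eq_of_ne hj]

theorem constantCoeff_restrictX : constantCoeff (restrictX i f) = constantCoeff f := by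
  rw [← coeff_zero_eq_constantCoeff_apply, ← coeff_zero_eq_constantCoeff_apply,
    ← Finsupp.single_zero i, coeff_single_restrictX]

theorem isUnit_restrictX (hf : IsUnit f) : IsUnit (restrictX i f) := by
  rwa [isUnit_iff_constantCoeff, constantCoeff_restrictX, ← isUnit_iff_constantCoeff]

theorem sub_restrictX_mem_span (s : Finset σ) (hs : ∀ j ≠ i, j ∈ s) :
    f - restrictX i f ∈ Ideal.span (X '' (s : Set σ)) :=
  mem_span_X_image_of_coeff_eq_zero s fun m hm => by
    rw [map_sub, coeff_restrictX, if_pos fun j hj => hm j (hs j hj), sub_self]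

theorem X_pow_dvd_restrictX {r : ℕ} (hr : ∀ l < r, coeff (Finsupp.single i l) f = 0) :
    X i ^ r ∣ restrictX i f := by
  classical
  refine X_pow_dvd_iff.2 fun m hm => ?_
  rw [coeff_restrictX]
  split_ifs with hi
  · have : m = Finsupp.single i (m i) := by
      ext j
      rcases eq_or_ne j i with rfl | hj
      · simp
      · rw [hi j hj, Finsupp.single_eq_of_ne hj]
    rw [this]
    exact hr _ hm
  · rfl

theorem constantCoeff_eq_of_X_pow_mul_eq_restrictX {r : ℕ} {ε : MvPowerSeries σ R}
    (h : restrictX i f = X i ^ r * ε) :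
    constantCoeff ε = coeff (Finsupp.single i r) f := by
  rw [← coeff_single_restrictX, h, X_pow_eq, coeff_monomial_mul, if_pos le_rfl, tsub_self,
    one_mul, coeff_zero_eq_constantCoeff_apply]

end Restriction

end MvPowerSeries

open MvPowerSeries

def commonGens (k : Type*) [Field k] (n s t : ℕ) : Set (MvPowerSeries (Fin (n + 2)) k) :=
  {f | ∃ i j : Fin (n + 2), i < j ∧ (i, j) ≠ (0, 1) ∧ f = X i * X j} ∪
    {f | ∃ j : Fin (n + 2), 2 ≤ (j : ℕ) ∧ f = X j ^ 2 - X 0 ^ s} ∪ {X 0 ^ t * X 1}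

section

variable {k : Type*} [Field k] {n s t : ℕ}

theorem Ia_eq_span_insert (a : MvPowerSeries (Fin (n + 2)) k) :
    Ia k n s t a =
      Ideal.span (insert (X 1 ^ 2 - a * X 0 * X 1 - X 0 ^ (s - t + 1)) (commonGens k n s t)) := by
  rw [Ia, Set.union_insert]
  rfl

theorem Ipz_eq_span_insert (p : ℕ) (z : MvPowerSeries (Fin (n + 2)) k) :
    Ipz k n s t p z = Ideal.span
      (insert (X 1 ^ 2 - X 0 ^ (p + 1) * X 1 - z * X 0 ^ (s - t + 1)) (commonGens k n s t)) := by
  rw [Ipz, Iy, Set.union_insert]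
  rfl

theorem X_mul_X_mem_span_commonGens {i j : Fin (n + 2)} (hij : i < j) (hne : (i, j) ≠ (0, 1)) :
    X i * X j ∈ Ideal.span (commonGens k n s t) :=
  Ideal.subset_span (.inl (.inl ⟨i, j, hij, hne, rfl⟩))

theorem X_zero_pow_mul_X_one_mem_span_commonGens :
    X 0 ^ t * X 1 ∈ Ideal.span (commonGens k n s t) :=
  Ideal.subset_span (.inr rfl)

theorem associated_scaleX_one_of_mem_commonGens {v : MvPowerSeries (Fin (n + 2)) k}
    (hv : IsUnit v) {g : MvPowerSeries (Fin (n + 2)) k} (hg : g ∈ commonGens k n s t) :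
    Associated (scaleX 1 v g) g := by
  have hX := associated_scaleX_X (i := 1) hv
  rcases hg with (⟨i, j, -, -, rfl⟩ | ⟨j, hj, rfl⟩) | rfl
  · rw [map_mul]
    exact (hX i).mul_mul (hX j)
  · have hj1 : j ≠ 1 := by rintro rfl; simp at hj
    rw [map_sub, map_pow, map_pow, scaleX_X_of_ne hj1, scaleX_X_of_ne zero_ne_one]
  · rw [map_mul, map_pow]
    exact (hX 0).pow_pow.mul_mul (hX 1)

theorem Ia_eq_Ia_of_sub_mem {a a' : MvPowerSeries (Fin (n + 2)) k}
    (h : a - a' ∈ Ideal.span (X '' ↑(Finset.Ioi (1 : Fin (n + 2))))) :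
    Ia k n s t a = Ia k n s t a' := by
  rw [Ia_eq_span_insert, Ia_eq_span_insert]
  refine Ideal.span_insert_eq_span_insert_of_sub_mem ?_
  rw [show X 1 ^ 2 - a * X 0 * X 1 - X 0 ^ (s - t + 1) -
    (X 1 ^ 2 - a' * X 0 * X 1 - X 0 ^ (s - t + 1)) = -((a - a') * (X 0 * X 1)) by ring]
  refine neg_mem (Ideal.mul_mem_of_mem_span h ?_)
  rintro _ ⟨j, hj, rfl⟩
  rw [show (X j * (X 0 * X 1) : MvPowerSeries (Fin (n + 2)) k) = X 0 * (X 1 * X j) by ring]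
  exact Ideal.mul_mem_left _ _ (X_mul_X_mem_span_commonGens (Finset.mem_Ioi.1 hj) (by simp))

theorem exists_sub_X_zero_pow_mul_add_mem_span {a : MvPowerSeries (Fin (n + 2)) k} {r : ℕ}
    (hr : coeff (Finsupp.single 0 r) a ≠ 0) (hrmin : ∀ l < r, coeff (Finsupp.single 0 l) a = 0) :
    ∃ ε c : MvPowerSeries (Fin (n + 2)) k, constantCoeff ε ≠ 0 ∧
      a - (X 0 ^ r * ε + c * X 1) ∈ Ideal.span (X '' ↑(Finset.Ioi (1 : Fin (n + 2)))) := by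
  obtain ⟨ε, hε⟩ := X_pow_dvd_restrictX hrmin
  have hsub := sub_restrictX_mem_span (i := 0) (f := a) (insert 1 (Finset.Ioi 1)) fun j hj => by
    rw [Finset.mem_insert, Finset.mem_Ioi, Fin.lt_def, Fin.val_one, Fin.ext_iff, Fin.val_one]
    rw [Ne, Fin.ext_iff, Fin.val_zero] at hj
    omega
  rw [Finset.coe_insert, Set.image_insert_eq, Ideal.mem_span_insert] at hsub
  obtain ⟨c, d, hd, hcd⟩ := hsub
  refine ⟨ε, c, constantCoeff_eq_of_X_pow_mul_eq_restrictX hε ▸ hr, ?_⟩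
  convert hd using 1
  linear_combination hcd + hε

theorem exists_idealIso_Ia_X_zero_pow_mul_add (r : ℕ) {ε : MvPowerSeries (Fin (n + 2)) k}
    (hε : constantCoeff ε ≠ 0) (c : MvPowerSeries (Fin (n + 2)) k) :
    ∃ w, IsUnit w ∧ IdealIso k (Ia k n s t (X 0 ^ r * ε + c * X 1)) (Ipz k n s t r w) := by
  set v := (1 - c * X 0) * ε⁻¹
  have hv : IsUnit (constantCoeff v) := by simpa [v] using hε
  have hvε : IsUnit (v * ε⁻¹) := by simpa [isUnit_iff_constantCoeff, v] using hε
  set Ψ := scaleXEquiv (i := 1) hv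
  have hΨ (f) : Ψ f = scaleX 1 v f := rfl
  refine ⟨Ψ.symm (v * ε⁻¹), hvε.map Ψ.symm, ⟨(Ideal.quotientEquivAlg _ _ Ψ ?_).symm⟩⟩
  rw [Ia_eq_span_insert, Ipz_eq_span_insert, Ideal.map_span_insert_of_associated
    (Ψ : MvPowerSeries (Fin (n + 2)) k →+* _)
    fun g hg => associated_scaleX_one_of_mem_commonGens (isUnit_iff_constantCoeff.2 hv) hg]
  have hq : (Ψ : MvPowerSeries (Fin (n + 2)) k →+* _)
      (X 1 ^ 2 - X 0 ^ (r + 1) * X 1 - Ψ.symm (v * ε⁻¹) * X 0 ^ (s - t + 1)) =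
      v * ε⁻¹ * (X 1 ^ 2 - (X 0 ^ r * ε + c * X 1) * X 0 * X 1 - X 0 ^ (s - t + 1)) := by
    simp only [RingHom.coe_coe, map_sub, map_mul, map_pow, AlgEquiv.apply_symm_apply]
    simp only [hΨ, scaleX_X, Pi.mulSingle_eq_same, scaleX_X_of_ne zero_ne_one]
    linear_combination (v * X 0 ^ (r + 1) * X 1) * MvPowerSeries.inv_mul_cancel ε hε
  rw [hq, Ideal.span_insert_unit_mul hvε]

theorem Ipz_restrictX (h : 2 * t - 1 ≤ s) (p : ℕ) (w : MvPowerSeries (Fin (n + 2)) k) :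
    Ipz k n s t p (restrictX 0 w) = Ipz k n s t p w := by
  rw [Ipz_eq_span_insert, Ipz_eq_span_insert]
  refine Ideal.span_insert_eq_span_insert_of_sub_mem ?_
  rw [show X 1 ^ 2 - X 0 ^ (p + 1) * X 1 - restrictX 0 w * X 0 ^ (s - t + 1) -
    (X 1 ^ 2 - X 0 ^ (p + 1) * X 1 - w * X 0 ^ (s - t + 1)) =
    (w - restrictX 0 w) * X 0 ^ (s - t + 1) by ring]
  refine Ideal.mul_mem_of_mem_span (sub_restrictX_mem_span (Finset.Ioi 0) fun j hj =>
    Finset.mem_Ioi.2 (Fin.pos_iff_ne_zero.2 hj)) ?_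
  rintro _ ⟨j, hj, rfl⟩
  rcases eq_or_ne j 1 with rfl | hj1
  · rw [show s - t + 1 = (s + 1 - 2 * t) + t by omega, pow_add, mul_comm, mul_assoc]
    exact Ideal.mul_mem_left _ _ X_zero_pow_mul_X_one_mem_span_commonGens
  · rw [pow_succ, mul_comm, mul_assoc]
    exact Ideal.mul_mem_left _ _ (X_mul_X_mem_span_commonGens (Finset.mem_Ioi.1 hj) (by simp [hj1]))

end

open MvPowerSeries in
theorem stmt_2_general {k : Type*} [Field k] (n s t : ℕ)
    (a : MvPowerSeries (Fin (n + 2)) k) (r : ℕ)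
    (hr : coeff (Finsupp.single (0 : Fin (n + 2)) r) a ≠ 0)
    (hrmin : ∀ i < r, coeff (Finsupp.single (0 : Fin (n + 2)) i) a = 0) :
    (∃ w : MvPowerSeries (Fin (n + 2)) k,
        IsUnit w ∧ IdealIso k (Ia k n s t a) (Ipz k n s t r w)) ∧
    (2 * t - 1 ≤ s → ∃ w : MvPowerSeries (Fin (n + 2)) k, IsUnit w ∧
        (∀ m : Fin (n + 2) →₀ ℕ, (∃ i : Fin (n + 2), i ≠ 0 ∧ m i ≠ 0) → coeff m w = 0) ∧
        IdealIso k (Ia k n s t a) (Ipz k n s t r w)) := by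
  obtain ⟨ε, c, hε, hsub⟩ := exists_sub_X_zero_pow_mul_add_mem_span hr hrmin
  obtain ⟨w, hw, hiso⟩ := exists_idealIso_Ia_X_zero_pow_mul_add (s := s) (t := t) r hε c
  rw [← Ia_eq_Ia_of_sub_mem hsub] at hiso
  exact ⟨⟨w, hw, hiso⟩, fun h => ⟨restrictX 0 w, isUnit_restrictX hw,
    fun _ hm => coeff_restrictX_of_ne_zero hm, Ipz_restrictX h r w ▸ hiso⟩⟩

open MvPowerSeries in
/-- If `a(x₁,0,…,0) ≠ 0` has order `r` in `k[[x₁]]`, then `I_a ∼ I_{r,w}` for some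
invertible power series `w`; moreover if `s ≥ 2t - 1` then `w` can be chosen to be an
invertible power series in `x₁` only. -/
theorem stmt_2 {k : Type*} [Field k] [IsAlgClosed k] [CharZero k] (n s t : ℕ)
    (hst : t + 1 ≤ s) (ht : 3 ≤ t + 1)
    (a : MvPowerSeries (Fin (n + 2)) k) (r : ℕ)
    (hr : coeff (Finsupp.single (0 : Fin (n + 2)) r) a ≠ 0)
    (hrmin : ∀ i < r, coeff (Finsupp.single (0 : Fin (n + 2)) i) a = 0) :
    (∃ w : MvPowerSeries (Fin (n + 2)) k,
        IsUnit w ∧ IdealIso k (Ia k n s t a) (Ipz k n s t r w)) ∧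
    (2 * t - 1 ≤ s → ∃ w : MvPowerSeries (Fin (n + 2)) k, IsUnit w ∧
        (∀ m : Fin (n + 2) →₀ ℕ, (∃ i : Fin (n + 2), i ≠ 0 ∧ m i ≠ 0) → coeff m w = 0) ∧
        IdealIso k (Ia k n s t a) (Ipz k n s t r w)) :=
  stmt_2_general n s t a r hr hrmin
end

section
/- Let r ≥ 0 be an integer such that 2(r+1) ≠ s−t+1, and let w ∈ R be an invertible power series. Then I_{r,w} ∼ I_{r,1}. -/
/-!
Since `w` is a unit, the generators of `I_{r,w}` give `x₁^{s+1} ∈ I_{r,w}` and then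
`n^{s+2} ⊆ I_{r,w}`, so both quotients are quotients of the noetherian ring `B = R/n^{s+2}`.
By Hensel's lemma `w = ρ^e` for a unit `ρ`, where `e = 2(s-t+1) - 4(r+1) ≠ 0` may be negative.
The substitution `x₁ ↦ ρ²x₁, x₂ ↦ ρ^{2(r+1)}x₂, x_j ↦ ρ^s x_j` multiplies every generator of
`I_{r,1}` by a unit, turning `x₁^{s-t+1}` into `ρ^{4(r+1)} w x₁^{s-t+1}`, so it maps `I_{r,1}`
onto `I_{r,w}`. On `B` it is surjective, because it multiplies each variable by a unit and the
maximal ideal of `B` is nilpotent, hence bijective since `B` is noetherian.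
-/

theorem RingHom.injective_of_surjective_of_isNoetherianRing {A : Type*} [CommRing A]
    [IsNoetherianRing A] (f : A →+* A) (hf : Function.Surjective f) : Function.Injective f := by
  have hker_succ (j : ℕ) (x : A) : (f ^ (j + 1)) x = f ((f ^ j) x) := by
    rw [pow_succ', RingHom.mul_def, RingHom.comp_apply]
  obtain ⟨m, hm⟩ := monotone_stabilizes_iff_noetherian.mpr (inferInstance : IsNoetherian A A)
    ⟨fun j => RingHom.ker (f ^ j), monotone_nat_of_le_succ fun j x hx => by
      rw [RingHom.mem_ker] at hx ⊢; rw [hker_succ, hx, map_zero]⟩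
  refine (injective_iff_map_eq_zero f).mpr fun x hx => ?_
  obtain ⟨y, rfl⟩ : ∃ y, (f ^ m) y = x := by
    rw [RingHom.coe_pow]; exact hf.iterate m x
  have hy : y ∈ RingHom.ker (f ^ (m + 1)) := by rw [RingHom.mem_ker, hker_succ, hx]
  have hstable : RingHom.ker (f ^ m) = RingHom.ker (f ^ (m + 1)) := hm (m + 1) m.le_succ
  rwa [← hstable] at hy

open scoped Pointwise in
theorem Subalgebra.eq_top_of_isUnit_mul_mem {K B ι : Type*} [CommRing K] [CommRing B]
    [Algebra K B] (A : Subalgebra K B) (x : ι → B) {N : ℕ}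
    (hN : Ideal.span (Set.range x) ^ N = ⊥)
    (hres : ∀ b, ∃ c : K, b - algebraMap K B c ∈ Ideal.span (Set.range x))
    (hx : ∀ i, ∃ v, IsUnit v ∧ v * x i ∈ A) : A = ⊤ := by
  set M := Ideal.span (Set.range x)
  have hmonomial (j : ℕ) : ∀ m ∈ Set.range x ^ j, ∃ v, IsUnit v ∧ v * m ∈ A := by
    induction j with
    | zero =>
      rintro m hm
      rw [pow_zero, Set.mem_one] at hm
      exact ⟨1, isUnit_one, by simp [hm, A.one_mem]⟩
    | succ j ih =>
      rintro _ ⟨m, hm, _, ⟨i, rfl⟩, rfl⟩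
      obtain ⟨v, hv, hvm⟩ := ih m hm
      obtain ⟨v', hv', hvx⟩ := hx i
      exact ⟨v * v', hv.mul hv', by simpa [mul_mul_mul_comm] using A.mul_mem hvm hvx⟩
  have hstep (j : ℕ) (y : B) (hy : y ∈ M ^ j) : ∃ a ∈ A, y - a ∈ M ^ (j + 1) := by
    have hspan : M ^ j = Submodule.span B (Set.range x ^ j) := Submodule.span_pow _ j
    -- quantifying over the multiplier `b` makes the claim stable under the `B`-action
    suffices ∀ b, ∃ a ∈ A, b * y - a ∈ M ^ (j + 1) by simpa using this 1
    rw [hspan] at hy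
    induction hy using Submodule.span_induction with
    | mem m hm =>
      intro b
      obtain ⟨v, hv, hvm⟩ := hmonomial j m hm
      obtain ⟨c, hc⟩ := hres (b * ↑hv.unit⁻¹)
      refine ⟨algebraMap K B c * (v * m), A.mul_mem (A.algebraMap_mem c) hvm, ?_⟩
      have hvmM : v * m ∈ M ^ j := Ideal.mul_mem_left _ _ (hspan ▸ Submodule.subset_span hm)
      have : b * m - algebraMap K B c * (v * m) =
          (b * ↑hv.unit⁻¹ - algebraMap K B c) * (v * m) := by
        linear_combination (-(b * m)) * hv.val_inv_mul
      rw [this, pow_succ']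
      exact Ideal.mul_mem_mul hc hvmM
    | zero => exact fun b => ⟨0, A.zero_mem, by simp⟩
    | add y z _ _ hy hz =>
      intro b
      obtain ⟨a, ha, hya⟩ := hy b
      obtain ⟨a', ha', hza⟩ := hz b
      exact ⟨a + a', A.add_mem ha ha', by convert Ideal.add_mem _ hya hza using 1; ring⟩
    | smul b' y _ hy =>
      intro b
      simpa [mul_assoc] using hy (b * b')
  have hdeep (d : ℕ) : ∀ y, ∃ a ∈ A, y - a ∈ M ^ d := by
    induction d with
    | zero => exact fun y => ⟨0, A.zero_mem, by simp⟩
    | succ d ih =>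
      intro y
      obtain ⟨a, ha, hya⟩ := ih y
      obtain ⟨a', ha', h⟩ := hstep d _ hya
      exact ⟨a + a', A.add_mem ha ha', by rwa [sub_add_eq_sub_sub]⟩
  refine eq_top_iff.mpr fun y _ => ?_
  obtain ⟨a, ha, hya⟩ := hdeep N y
  rw [hN, Ideal.mem_bot, sub_eq_zero] at hya
  exact hya ▸ ha

open Polynomial in
theorem HenselianRing.exists_pow_eq {K A : Type*} [Field K] [IsAlgClosed K] [CommRing A]
    [Algebra K A] (I : Ideal A) [HenselianRing A I] {u : A} {c : K} (hc : c ≠ 0)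
    (hu : u - algebraMap K A c ∈ I) {m : ℕ} (hm : (m : K) ≠ 0) : ∃ ρ, ρ ^ m = u := by
  have hm0 : m ≠ 0 := by rintro rfl; simp at hm
  obtain ⟨γ, rfl⟩ := IsAlgClosed.exists_pow_nat_eq c (Nat.pos_of_ne_zero hm0)
  have hγ : γ ≠ 0 := by rintro rfl; simp [hm0] at hc
  have hsimple : IsUnit (Ideal.Quotient.mk I
      ((derivative (X ^ m - C u)).eval (algebraMap K A γ))) := by
    simpa [derivative_X_pow] using
      ((mul_ne_zero hm (pow_ne_zero (m - 1) hγ)).isUnit.map (algebraMap K A)).map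
        (Ideal.Quotient.mk I)
  obtain ⟨ρ, hρ, -⟩ := HenselianRing.is_henselian (X ^ m - C u) (monic_X_pow_sub_C u hm0)
    (algebraMap K A γ) (by simpa [← map_pow] using I.neg_mem_iff.mpr hu) hsimple
  exact ⟨ρ, by simpa [sub_eq_zero] using hρ⟩

theorem Ideal.nonempty_quotient_algEquiv_of_map_eq {K R : Type*} [CommRing K] [CommRing R]
    [Algebra K R] [IsNoetherianRing R] {Φ : R →ₐ[K] R} {J : Ideal R} (hJ : J ≤ J.comap Φ)
    (hsurj : Function.Surjective (Ideal.quotientMapₐ J Φ hJ)) {I I' : Ideal R} (hI : J ≤ I)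
    (hI' : J ≤ I') (hmap : I.map Φ = I') : Nonempty ((R ⧸ I') ≃ₐ[K] (R ⧸ I)) := by
  let e := AlgEquiv.ofBijective (Ideal.quotientMapₐ J Φ hJ)
    ⟨RingHom.injective_of_surjective_of_isNoetherianRing
      (Ideal.quotientMapₐ J Φ hJ).toRingHom hsurj, hsurj⟩
  have he : I'.map (Ideal.Quotient.mkₐ K J) =
      (I.map (Ideal.Quotient.mkₐ K J)).map (e : R ⧸ J →+* R ⧸ J) := by
    rw [← hmap, ← Ideal.map_coe (Ideal.Quotient.mkₐ K J), ← Ideal.map_coe (Ideal.Quotient.mkₐ K J),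
      ← Ideal.map_coe Φ, Ideal.map_map, Ideal.map_map]
    rfl
  exact ⟨(DoubleQuot.quotQuotEquivQuotOfLEₐ K hI').symm.trans
    ((Ideal.quotientEquivAlg _ _ e he).symm.trans (DoubleQuot.quotQuotEquivQuotOfLEₐ K hI))⟩

namespace MvPowerSeries
variable {σ R : Type*} [CommRing R]

theorem mem_span_X_image_of_constantCoeff_eq_zero (S : Finset σ) {f : MvPowerSeries σ R}
    (hf : ∀ d, coeff d f ≠ 0 → ∀ j ∉ S, d j = 0) (h0 : constantCoeff f = 0) :
    f ∈ Ideal.span (X '' S) := by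
  classical
  induction S using Finset.induction_on generalizing f with
  | empty =>
    convert Ideal.zero_mem _
    ext d
    by_contra hd
    have : d = 0 := Finsupp.ext fun j => hf d hd j (Finset.notMem_empty j)
    simp_all
  | insert i S hi ih =>
    let g : MvPowerSeries σ R := fun d => if d i = 0 then coeff d f else 0
    have hg (d) : coeff d g = if d i = 0 then coeff d f else 0 := rfl
    have hdvd : X i ∣ f - g := X_dvd_iff.mpr fun d hd => by rw [map_sub, hg, if_pos hd, sub_self]
    have hgS : g ∈ Ideal.span (X '' S) := by
      refine ih (fun d hd j hj => ?_) ?_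
      · rw [hg] at hd
        split_ifs at hd with hdi
        · rcases eq_or_ne j i with rfl | hji
          · exact hdi
          · exact hf d hd j (by simp [hji, hj])
        · exact absurd rfl hd
      · rw [← coeff_zero_eq_constantCoeff_apply, hg, Finsupp.coe_zero, Pi.zero_apply, if_pos rfl,
          coeff_zero_eq_constantCoeff_apply, h0]
    rw [← sub_add_cancel f g]
    refine Ideal.add_mem _ ?_ (Ideal.span_mono (by gcongr; simp) hgS)
    obtain ⟨q, hq⟩ := hdvd
    rw [hq]
    exact Ideal.mul_mem_right _ _ (Ideal.subset_span ⟨i, by simp, rfl⟩)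

theorem sub_C_constantCoeff_mem_span_range_X [Finite σ] (f : MvPowerSeries σ R) :
    f - C (constantCoeff f) ∈ Ideal.span (Set.range X) := by
  have := Fintype.ofFinite σ
  simpa using mem_span_X_image_of_constantCoeff_eq_zero (f := f - C (constantCoeff f))
    Finset.univ (by simp) (by simp)

section
variable {σ k : Type*} [Field k]

theorem exists_pow_eq_of_isUnit [Finite σ] [IsAlgClosed k] {w : MvPowerSeries σ k}
    (hw : IsUnit w) {m : ℕ} (hm : (m : k) ≠ 0) : ∃ ρ, ρ ^ m = w :=
  HenselianRing.exists_pow_eq (Ideal.span (Set.range X)) (hw.map constantCoeff).ne_zero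
    (sub_C_constantCoeff_mem_span_range_X w) hm

theorem exists_zpow_eq [Finite σ] [IsAlgClosed k] [CharZero k] (u : (MvPowerSeries σ k)ˣ)
    {m : ℤ} (hm : m ≠ 0) : ∃ ρ : (MvPowerSeries σ k)ˣ, ρ ^ m = u := by
  have hroot (v : (MvPowerSeries σ k)ˣ) : ∃ ρ : (MvPowerSeries σ k)ˣ, ρ ^ m.natAbs = v := by
    have hm' : m.natAbs ≠ 0 := Int.natAbs_ne_zero.mpr hm
    obtain ⟨ρ, hρ⟩ := exists_pow_eq_of_isUnit v.isUnit (Nat.cast_ne_zero.mpr hm')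
    have hρu : IsUnit ρ := (isUnit_pow_iff hm').mp (hρ ▸ v.isUnit)
    exact ⟨hρu.unit, Units.ext (by simpa using hρ)⟩
  rcases Int.natAbs_eq m with h | h
  · obtain ⟨ρ, hρ⟩ := hroot u
    exact ⟨ρ, by rw [h, zpow_natCast, hρ]⟩
  · obtain ⟨ρ, hρ⟩ := hroot u⁻¹
    exact ⟨ρ, by rw [h, zpow_neg, zpow_natCast, hρ, inv_inv]⟩

variable [Finite σ]

noncomputable def scaleVars (u : σ → MvPowerSeries σ k) :
    MvPowerSeries σ k →ₐ[k] MvPowerSeries σ k :=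
  substAlgHom (a := fun i => u i * X i) (hasSubst_of_constantCoeff_zero fun i => by simp)

theorem scaleVars_X (u : σ → MvPowerSeries σ k) (i : σ) : scaleVars u (X i) = u i * X i :=
  substAlgHom_X _ i

theorem pow_span_X_le_comap_scaleVars (u : σ → MvPowerSeries σ k) (N : ℕ) :
    Ideal.span (Set.range X) ^ N ≤ (Ideal.span (Set.range X) ^ N).comap (scaleVars u) := by
  rw [← Ideal.map_le_iff_le_comap, Ideal.map_pow]
  refine Ideal.pow_right_mono ?_ N
  rw [Ideal.map_span, Ideal.span_le]
  rintro _ ⟨_, ⟨i, rfl⟩, rfl⟩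
  rw [scaleVars_X]
  exact Ideal.mul_mem_left _ _ (Ideal.subset_span ⟨i, rfl⟩)

theorem scaleVars_quotientMap_surjective {u : σ → MvPowerSeries σ k} (hu : ∀ i, IsUnit (u i))
    (N : ℕ) : Function.Surjective
      (Ideal.quotientMapₐ _ (scaleVars u) (pow_span_X_le_comap_scaleVars u N)) := by
  set J := Ideal.span (Set.range (X : σ → MvPowerSeries σ k)) ^ N
  have hM : Ideal.span (Set.range fun i => Ideal.Quotient.mk J (X i)) =
      (Ideal.span (Set.range X)).map (Ideal.Quotient.mk J) := by
    rw [Ideal.map_span, ← Set.range_comp]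
    rfl
  rw [← AlgHom.range_eq_top]
  refine Subalgebra.eq_top_of_isUnit_mul_mem _ (fun i => Ideal.Quotient.mk J (X i)) (N := N)
    ?_ (fun b => ?_)
    (fun i => ⟨_, (hu i).map (Ideal.Quotient.mk J), ⟨Ideal.Quotient.mk J (X i), ?_⟩⟩)
  · rw [hM, ← Ideal.map_pow, Ideal.map_quotient_self]
  · obtain ⟨f, rfl⟩ := Ideal.Quotient.mk_surjective b
    refine ⟨constantCoeff f, ?_⟩
    rw [hM]
    convert Ideal.mem_map_of_mem _ (sub_C_constantCoeff_mem_span_range_X f) using 1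
    rw [map_sub]
    rfl
  · change Ideal.Quotient.mk J (scaleVars u (X i)) = _
    rw [scaleVars_X, map_mul]

end

end MvPowerSeries

open MvPowerSeries

section
variable {k : Type*} [Field k] {n s t r : ℕ} {w : MvPowerSeries (Fin (n + 2)) k}

theorem Iy_le_iff {y : Fin (n + 2) → MvPowerSeries (Fin (n + 2)) k}
    {J : Ideal (MvPowerSeries (Fin (n + 2)) k)} :
    Iy k n s t r w y ≤ J ↔
      (∀ i j, i < j → (i, j) ≠ (0, 1) → y i * y j ∈ J) ∧
      (∀ j : Fin (n + 2), 2 ≤ (j : ℕ) → y j ^ 2 - y 0 ^ s ∈ J) ∧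
      y 1 ^ 2 - y 0 ^ (r + 1) * y 1 - w * y 0 ^ (s - t + 1) ∈ J ∧ y 0 ^ t * y 1 ∈ J := by
  simp only [Iy, Ideal.span_le, Set.union_subset_iff, Set.insert_subset_iff,
    Set.singleton_subset_iff, Set.ofPred_subset, SetLike.mem_coe, and_assoc, forall_exists_index,
    and_imp]
  exact and_congr
    ⟨fun h i j hij hne => h _ i j hij hne rfl, fun h _ i j hij hne he => he ▸ h i j hij hne⟩
    (and_congr ⟨fun h j hj => h _ j hj rfl, fun h _ j hj he => he ▸ h j hj⟩ Iff.rfl)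

theorem X_zero_pow_succ_mem_Ipz (hts : t ≤ s) (hw : IsUnit w) :
    X 0 ^ (s + 1) ∈ Ipz k n s t r w := by
  obtain ⟨-, -, h₃, h₄⟩ := Iy_le_iff.mp (le_refl (Ipz k n s t r w))
  rw [← Ideal.unit_mul_mem_iff_mem _ hw]
  have : w * X 0 ^ (s + 1) = X 0 ^ t * X 1 * X 1 - X 0 ^ (r + 1) * (X 0 ^ t * X 1) -
      X 0 ^ t * (X 1 ^ 2 - X 0 ^ (r + 1) * X 1 - w * X 0 ^ (s - t + 1)) := by
    rw [show s + 1 = t + (s - t + 1) by omega]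
    ring
  rw [this]
  exact sub_mem (sub_mem (Ideal.mul_mem_right _ _ h₄) (Ideal.mul_mem_left _ _ h₄))
    (Ideal.mul_mem_left _ _ h₃)

theorem nIdeal_sq_le_Ipz_sup (hts : t < s) (hs : 2 ≤ s) :
    nIdeal k (n + 2) ^ 2 ≤ Ipz k n s t r w ⊔ Ideal.span {X 0} * nIdeal k (n + 2) := by
  set J := Ipz k n s t r w ⊔ Ideal.span {X 0} * nIdeal k (n + 2)
  obtain ⟨h₁, h₂, h₃, -⟩ := Iy_le_iff.mp (le_refl (Ipz k n s t r w))
  have hX (i : Fin (n + 2)) : X i ∈ nIdeal k (n + 2) := Ideal.subset_span ⟨i, rfl⟩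
  have hX₀ {g} (hg : g ∈ nIdeal k (n + 2)) : X 0 * g ∈ J :=
    Ideal.mem_sup_right (Ideal.mul_mem_mul (Ideal.mem_span_singleton_self _) hg)
  have hgen (i j : Fin (n + 2)) (hi : i ≠ 0) (hij : i < j) : X i * X j ∈ J :=
    Ideal.mem_sup_left (h₁ i j hij fun h => hi (congrArg Prod.fst h))
  have hXX (i j : Fin (n + 2)) : X i * X j ∈ J := by
    rcases eq_or_ne i 0 with rfl | hi
    · exact hX₀ (hX j)
    rcases eq_or_ne j 0 with rfl | hj
    · rw [mul_comm]; exact hX₀ (hX i)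
    rcases lt_trichotomy i j with hij | rfl | hji
    · exact hgen i j hi hij
    · rcases eq_or_ne i 1 with rfl | hi₁
      · have : (X 1 : MvPowerSeries (Fin (n + 2)) k) * X 1 =
            (X 1 ^ 2 - X 0 ^ (r + 1) * X 1 - w * X 0 ^ (s - t + 1)) +
              X 0 * (X 0 ^ r * X 1 + w * X 0 ^ (s - t)) := by
          ring
        rw [this]
        exact Ideal.add_mem _ (Ideal.mem_sup_left h₃) (hX₀ (Ideal.add_mem _
          (Ideal.mul_mem_left _ _ (hX 1))
          (Ideal.mul_mem_left _ _ (Ideal.pow_mem_of_mem _ (hX 0) _ (by omega)))))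
      · have hi₂ : 2 ≤ (i : ℕ) := by
          rcases i with ⟨_ | _ | i, _⟩
          · exact absurd rfl hi
          · exact absurd rfl hi₁
          · simp
        have : (X i : MvPowerSeries (Fin (n + 2)) k) * X i =
            (X i ^ 2 - X 0 ^ s) + X 0 * X 0 ^ (s - 1) := by
          rw [← pow_succ', Nat.sub_add_cancel (by omega)]
          ring
        rw [this]
        exact Ideal.add_mem _ (Ideal.mem_sup_left (h₂ i hi₂))
          (hX₀ (Ideal.pow_mem_of_mem _ (hX 0) _ (by omega)))
    · rw [mul_comm]; exact hgen j i hj hji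
  rw [nIdeal, sq, Ideal.span_mul_span', Ideal.span_le]
  rintro _ ⟨_, ⟨i, rfl⟩, _, ⟨j, rfl⟩, rfl⟩
  exact hXX i j

theorem nIdeal_pow_succ_le_Ipz_sup (hts : t < s) (hs : 2 ≤ s) (j : ℕ) :
    nIdeal k (n + 2) ^ (j + 1) ≤ Ipz k n s t r w ⊔ Ideal.span {X 0 ^ j} * nIdeal k (n + 2) := by
  set I := Ipz k n s t r w
  set 𝔫 := nIdeal k (n + 2)
  induction j with
  | zero => simp
  | succ j ih =>
    calc 𝔫 ^ (j + 1 + 1) = 𝔫 ^ (j + 1) * 𝔫 := pow_succ _ _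
      _ ≤ (I ⊔ Ideal.span {X 0 ^ j} * 𝔫) * 𝔫 := Ideal.mul_mono_left ih
      _ = I * 𝔫 ⊔ Ideal.span {X 0 ^ j} * 𝔫 ^ 2 := by rw [Ideal.sup_mul, mul_assoc, ← sq]
      _ ≤ I ⊔ Ideal.span {X 0 ^ j} * (I ⊔ Ideal.span {X 0} * 𝔫) :=
        sup_le_sup Ideal.mul_le_left
          (Ideal.mul_mono_right (nIdeal_sq_le_Ipz_sup (r := r) (w := w) hts hs))
      _ ≤ I ⊔ Ideal.span {X 0 ^ (j + 1)} * 𝔫 := by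
        rw [Ideal.mul_sup, ← mul_assoc, Ideal.span_singleton_mul_span_singleton, ← pow_succ]
        exact sup_le le_sup_left (sup_le (Ideal.mul_le_right.trans le_sup_left) le_sup_right)

theorem nIdeal_pow_le_Ipz (hts : t < s) (hs : 2 ≤ s) (hw : IsUnit w) :
    nIdeal k (n + 2) ^ (s + 2) ≤ Ipz k n s t r w :=
  (nIdeal_pow_succ_le_Ipz_sup hts hs (s + 1)).trans <| sup_le le_rfl <| Ideal.mul_le_left.trans <|
    (Ideal.span_singleton_le_iff_mem _).mpr (X_zero_pow_succ_mem_Ipz hts.le hw)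

-- These weights make every generator of `Ipz k n s t r 1` weighted homogeneous, except for the
-- term `X 0 ^ (s - t + 1)`.
def ipzWeight (r s : ℕ) {n : ℕ} (i : Fin (n + 2)) : ℕ :=
  if i = 0 then 2 else if i = 1 then 2 * (r + 1) else s

theorem map_scaleVars_ipzWeight_Ipz_one {ρ : MvPowerSeries (Fin (n + 2)) k} (hρ : IsUnit ρ)
    (hρw : ρ ^ (2 * (s - t + 1)) = ρ ^ (4 * (r + 1)) * w) :
    (Ipz k n s t r 1).map (scaleVars fun i => ρ ^ ipzWeight r s i) = Ipz k n s t r w := by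
  set Φ := scaleVars fun i : Fin (n + 2) => ρ ^ ipzWeight r s i
  have hΦ (i) : Φ (X i) = ρ ^ ipzWeight r s i * X i := scaleVars_X _ i
  have hw₀ : ipzWeight r s (0 : Fin (n + 2)) = 2 := by simp [ipzWeight]
  have hw₁ : ipzWeight r s (1 : Fin (n + 2)) = 2 * (r + 1) := by simp [ipzWeight]
  have hw₂ (j : Fin (n + 2)) (hj : 2 ≤ (j : ℕ)) : ipzWeight r s j = s := by
    rw [ipzWeight, if_neg (by rintro rfl; simp at hj), if_neg (by rintro rfl; simp at hj)]
  have e₁ (i j : Fin (n + 2)) :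
      Φ (X i * X j) = ρ ^ (ipzWeight r s i + ipzWeight r s j) * (X i * X j) := by
    rw [map_mul, hΦ, hΦ]; ring
  have e₂ (j : Fin (n + 2)) (hj : 2 ≤ (j : ℕ)) :
      Φ (X j ^ 2 - X 0 ^ s) = ρ ^ (2 * s) * (X j ^ 2 - X 0 ^ s) := by
    simp only [map_sub, map_pow, hΦ, hw₀, hw₂ j hj]; ring
  have e₃ : Φ (X 1 ^ 2 - X 0 ^ (r + 1) * X 1 - 1 * X 0 ^ (s - t + 1)) =
      ρ ^ (4 * (r + 1)) * (X 1 ^ 2 - X 0 ^ (r + 1) * X 1 - w * X 0 ^ (s - t + 1)) := by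
    simp only [map_sub, map_mul, map_pow, map_one, hΦ, hw₀, hw₁]
    linear_combination (-X 0 ^ (s - t + 1)) * hρw
  have e₄ : Φ (X 0 ^ t * X 1) = ρ ^ (2 * t + 2 * (r + 1)) * (X 0 ^ t * X 1) := by
    simp only [map_mul, map_pow, hΦ, hw₀, hw₁]; ring
  apply le_antisymm
  · obtain ⟨g₁, g₂, g₃, g₄⟩ := Iy_le_iff.mp (le_refl (Ipz k n s t r w))
    rw [Ideal.map_le_iff_le_comap, Ipz, Iy_le_iff]
    refine ⟨fun i j hij hne => ?_, fun j hj => ?_, ?_, ?_⟩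
    · rw [Ideal.mem_comap, e₁]; exact Ideal.mul_mem_left _ _ (g₁ i j hij hne)
    · rw [Ideal.mem_comap, e₂ j hj]; exact Ideal.mul_mem_left _ _ (g₂ j hj)
    · rw [Ideal.mem_comap, e₃]; exact Ideal.mul_mem_left _ _ g₃
    · rw [Ideal.mem_comap, e₄]; exact Ideal.mul_mem_left _ _ g₄
  · obtain ⟨g₁, g₂, g₃, g₄⟩ := Iy_le_iff.mp (le_refl (Ipz k n s t r 1))
    rw [Ipz, Iy_le_iff]
    refine ⟨fun i j hij hne => ?_, fun j hj => ?_, ?_, ?_⟩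
    · rw [← Ideal.unit_mul_mem_iff_mem _ (hρ.pow _), ← e₁]
      exact Ideal.mem_map_of_mem _ (g₁ i j hij hne)
    · rw [← Ideal.unit_mul_mem_iff_mem _ (hρ.pow _), ← e₂ j hj]
      exact Ideal.mem_map_of_mem _ (g₂ j hj)
    · rw [← Ideal.unit_mul_mem_iff_mem _ (hρ.pow _), ← e₃]
      exact Ideal.mem_map_of_mem _ g₃
    · rw [← Ideal.unit_mul_mem_iff_mem _ (hρ.pow _), ← e₄]
      exact Ideal.mem_map_of_mem _ g₄

end

open MvPowerSeries in
/-- If `2(r+1) ≠ s - t + 1` and `w` is invertible, then `I_{r,w} ∼ I_{r,1}`. -/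
theorem stmt_4 {k : Type*} [Field k] [IsAlgClosed k] [CharZero k] (n s t : ℕ)
    (hst : t + 1 ≤ s) (ht : 3 ≤ t + 1)
    (r : ℕ) (hr : 2 * (r + 1) ≠ s - t + 1)
    (w : MvPowerSeries (Fin (n + 2)) k) (hw : IsUnit w) :
    IdealIso k (Ipz k n s t r w) (Ipz k n s t r 1) := by
  obtain ⟨ρ, hρ⟩ := exists_zpow_eq hw.unit (m := 2 * (((s - t + 1 : ℕ) : ℤ) - 2 * (r + 1)))
    (by omega)
  have hρw : (ρ : MvPowerSeries (Fin (n + 2)) k) ^ (2 * (s - t + 1)) = ρ ^ (4 * (r + 1)) * w := by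
    have : ρ ^ ((2 * (s - t + 1) : ℕ) : ℤ) =
        ρ ^ ((4 * (r + 1) : ℕ) : ℤ) * ρ ^ (2 * (((s - t + 1 : ℕ) : ℤ) - 2 * (r + 1))) := by
      rw [← zpow_add]; congr 1; push_cast; ring
    rw [hρ, zpow_natCast, zpow_natCast] at this
    simpa using congrArg Units.val this
  have hle (v) (hv : IsUnit v) : nIdeal k (n + 2) ^ (s + 2) ≤ Ipz k n s t r v :=
    nIdeal_pow_le_Ipz (by omega) (by omega) hv
  exact Ideal.nonempty_quotient_algEquiv_of_map_eq (pow_span_X_le_comap_scaleVars _ (s + 2))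
    (scaleVars_quotientMap_surjective (fun i => ρ.isUnit.pow _) (s + 2)) (hle 1 isUnit_one)
    (hle w hw) (map_scaleVars_ipzWeight_Ipz_one ρ.isUnit hρw)
end

section
/- Assume s ≥ t+2. Let p ≥ 0 be an integer, let z ∈ R be an invertible power series, and let l = Σ_{i=1}^h a_i x_i with a_i ∈ R. If l² ∈ I_{p,z} + n³, then a₁ ∈ n; and if moreover p = 0, then both a₁ ∈ n and a₂ ∈ n. -/
/-!
Substituting `xᵢ ↦ vᵢ ε` for a vector `v ∈ kʰ` is a `k`-algebra map `R → k⟦ε⟧` that sends `n³`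
into `(ε³)` and `l = Σ aᵢ xᵢ` to `ε · Σ vᵢ aᵢ(ε v)`. If `v` kills the quadratic parts of the
generators of `I_{p,z}` (`t ≥ 2` and `s ≥ t + 2` make all their other terms cubic), then all of
`I_{p,z} + n³` lands in `(ε³)`, so the `ε²`-coefficient `(Σ vᵢ aᵢ(0))²` of the image of `l²`
vanishes. Both `v = (1, 0, …, 0)` and, when `p = 0`, `v = (1, 1, 0, …, 0)` qualify.
-/

namespace MvPowerSeries

section ConstantCoeff

variable {R : Type*} [CommRing R] {h : ℕ}

def zeroFirstVars (j : ℕ) (f : MvPowerSeries (Fin h) R) : MvPowerSeries (Fin h) R :=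
  fun m => if ∀ i : Fin h, (i : ℕ) < j → m i = 0 then coeff m f else 0

theorem coeff_zeroFirstVars (j : ℕ) (f : MvPowerSeries (Fin h) R) (m : Fin h →₀ ℕ) :
    coeff m (zeroFirstVars j f) = if ∀ i : Fin h, (i : ℕ) < j → m i = 0 then coeff m f else 0 :=
  rfl

theorem zeroFirstVars_zero (f : MvPowerSeries (Fin h) R) : zeroFirstVars 0 f = f := by
  ext m
  simp [coeff_zeroFirstVars]

theorem zeroFirstVars_self (f : MvPowerSeries (Fin h) R) :
    zeroFirstVars h f = C (constantCoeff f) := by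
  ext m
  rw [coeff_zeroFirstVars, coeff_C]
  by_cases hm : m = 0
  · simp [hm]
  · rw [if_neg fun H => hm (Finsupp.ext fun i => H i i.isLt), if_neg hm]

theorem X_dvd_zeroFirstVars_sub_zeroFirstVars_succ (f : MvPowerSeries (Fin h) R) {j : ℕ}
    (hj : j < h) : X ⟨j, hj⟩ ∣ zeroFirstVars j f - zeroFirstVars (j + 1) f := by
  rw [X_dvd_iff]
  intro m hm
  have hiff : (∀ i : Fin h, (i : ℕ) < j → m i = 0) ↔ ∀ i : Fin h, (i : ℕ) < j + 1 → m i = 0 :=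
    ⟨fun H i hi => (Nat.lt_succ_iff_lt_or_eq.mp hi).elim (H i)
        fun hij => by rwa [show i = ⟨j, hj⟩ from Fin.ext hij],
      fun H i hi => H i (Nat.lt_succ_of_lt hi)⟩
  rw [map_sub, coeff_zeroFirstVars, coeff_zeroFirstVars, if_congr hiff rfl rfl, sub_self]

end ConstantCoeff

section RestrictToLine

variable {σ R : Type*} [Fintype σ] [CommRing R]

theorem hasSubst_C_mul_X (v : σ → R) :
    HasSubst fun i => PowerSeries.C (v i) * PowerSeries.X :=
  hasSubst_of_constantCoeff_zero fun i => by simp [PowerSeries.X_apply, PowerSeries.C_apply]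

noncomputable def restrictToLine (v : σ → R) : MvPowerSeries σ R →ₐ[R] PowerSeries R :=
  substAlgHom (hasSubst_C_mul_X v)

theorem restrictToLine_X (v : σ → R) (i : σ) :
    restrictToLine v (X i) = PowerSeries.C (v i) * PowerSeries.X :=
  substAlgHom_X _ i

theorem constantCoeff_restrictToLine (v : σ → R) (f : MvPowerSeries σ R) :
    PowerSeries.constantCoeff (restrictToLine v f) = constantCoeff f := by
  have hrest : PowerSeries.constantCoeff (restrictToLine v (f - C (constantCoeff f))) = 0 := by
    rw [restrictToLine, coe_substAlgHom]
    exact constantCoeff_subst_eq_zero (hasSubst_C_mul_X v)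
      (fun i => by simp [PowerSeries.X_apply, PowerSeries.C_apply]) (by simp)
  rw [map_sub, map_sub, sub_eq_zero] at hrest
  rw [hrest, restrictToLine, coe_substAlgHom, subst_C]
  rfl

theorem restrictToLine_sum_mul_X (v : σ → R) (a : σ → MvPowerSeries σ R) :
    restrictToLine v (∑ i, a i * X i) =
      PowerSeries.X * ∑ i, PowerSeries.C (v i) * restrictToLine v (a i) := by
  simp only [map_sum, map_mul, restrictToLine_X, Finset.mul_sum]
  exact Finset.sum_congr rfl fun i _ => by ring

theorem sum_mul_constantCoeff_eq_zero_of_X_pow_three_dvd [IsReduced R] {v : σ → R}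
    {a : σ → MvPowerSeries σ R}
    (h : PowerSeries.X ^ 3 ∣ restrictToLine v ((∑ i, a i * X i) ^ 2)) :
    ∑ i, v i * constantCoeff (a i) = 0 := by
  set g := ∑ i, PowerSeries.C (v i) * restrictToLine v (a i)
  have hg : PowerSeries.constantCoeff g = ∑ i, v i * constantCoeff (a i) := by
    simp [g, constantCoeff_restrictToLine]
  rw [map_pow, restrictToLine_sum_mul_X, mul_pow, PowerSeries.X_pow_dvd_iff] at h
  have hcoeff := h 2 (by norm_num)
  rw [PowerSeries.coeff_X_pow_mul', if_pos le_rfl, Nat.sub_self,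
    PowerSeries.coeff_zero_eq_constantCoeff_apply, map_pow, hg] at hcoeff
  exact IsReduced.eq_zero _ ⟨2, hcoeff⟩

end RestrictToLine

end MvPowerSeries

open MvPowerSeries

theorem mem_nIdeal_of_constantCoeff_eq_zero {k : Type*} [Field k] {h : ℕ}
    {f : MvPowerSeries (Fin h) k} (hf : constantCoeff f = 0) : f ∈ nIdeal k h := by
  suffices zeroFirstVars 0 f - zeroFirstVars h f ∈ nIdeal k h by
    rwa [zeroFirstVars_zero, zeroFirstVars_self, hf, map_zero, sub_zero] at this
  rw [← Finset.sum_range_sub' (fun j => zeroFirstVars j f)]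
  refine Ideal.sum_mem _ fun j hj => ?_
  obtain ⟨g, hg⟩ := X_dvd_zeroFirstVars_sub_zeroFirstVars_succ f (Finset.mem_range.mp hj)
  rw [hg]
  exact Ideal.mul_mem_right _ _ (Ideal.subset_span ⟨_, rfl⟩)

theorem nIdeal_pow_le_comap_restrictToLine {k : Type*} [Field k] {h : ℕ} (v : Fin h → k)
    (m : ℕ) : nIdeal k h ^ m ≤ (Ideal.span {PowerSeries.X ^ m}).comap (restrictToLine v) := by
  have hn : nIdeal k h ≤ (Ideal.span {PowerSeries.X}).comap (restrictToLine v) := by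
    rw [nIdeal, Ideal.span_le]
    rintro _ ⟨i, rfl⟩
    exact Ideal.mem_span_singleton.mpr ⟨PowerSeries.C (v i), by rw [restrictToLine_X, mul_comm]⟩
  calc nIdeal k h ^ m ≤ ((Ideal.span {PowerSeries.X}).comap (restrictToLine v)) ^ m :=
        Ideal.pow_right_mono hn m
    _ ≤ _ := by rw [← Ideal.span_singleton_pow]; exact Ideal.le_comap_pow _ m

theorem Ipz_le_comap_restrictToLine {k : Type*} [Field k] {n s t p : ℕ} (ht : 2 ≤ t)
    (hst : t + 2 ≤ s) (z : MvPowerSeries (Fin (n + 2)) k) {v : Fin (n + 2) → k}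
    (hv : ∀ j : Fin (n + 2), 2 ≤ (j : ℕ) → v j = 0) (hv1 : v 1 = 0 ∨ (p = 0 ∧ v 1 = v 0)) :
    Ipz k n s t p z ≤ (Ideal.span {PowerSeries.X ^ 3}).comap (restrictToLine v) := by
  obtain ⟨s, rfl⟩ : ∃ s', s = s' + 3 := ⟨s - 3, by omega⟩
  obtain ⟨t, rfl⟩ : ∃ t', t = t' + 2 := ⟨t - 2, by omega⟩
  obtain ⟨q, hq⟩ : ∃ q, s + 3 - (t + 2) + 1 = q + 3 := ⟨s - t - 1, by omega⟩
  rw [Ipz, Iy, Ideal.span_le]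
  rintro f ((⟨i, j, hij, hne, rfl⟩ | ⟨j, hj, rfl⟩) | rfl | rfl) <;>
    simp only [SetLike.mem_coe, Ideal.mem_comap, Ideal.mem_span_singleton, map_mul, map_sub,
      map_pow, restrictToLine_X]
  · have hj : 2 ≤ (j : ℕ) := by
      by_contra hj
      have hi0 : (i : ℕ) = 0 := by have := Fin.lt_def.mp hij; omega
      exact hne (Prod.ext (Fin.ext hi0) (Fin.ext (by simp; omega)))
    simp [hv j hj]
  · simp only [hv j hj, map_zero]
    exact ⟨-PowerSeries.C (v 0) ^ (s + 3) * PowerSeries.X ^ s, by ring⟩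
  · rw [hq]
    rcases hv1 with h1 | ⟨rfl, h1⟩
    · simp only [h1, map_zero]
      exact ⟨-restrictToLine v z * PowerSeries.C (v 0) ^ (q + 3) * PowerSeries.X ^ q, by ring⟩
    · rw [h1]
      exact ⟨-restrictToLine v z * PowerSeries.C (v 0) ^ (q + 3) * PowerSeries.X ^ q, by ring⟩
  · exact ⟨PowerSeries.C (v 0) ^ (t + 2) * PowerSeries.C (v 1) * PowerSeries.X ^ t, by ring⟩

theorem sum_mul_constantCoeff_eq_zero_of_sq_mem {k : Type*} [Field k] {n s t p : ℕ} (ht : 2 ≤ t)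
    (hst : t + 2 ≤ s) {z : MvPowerSeries (Fin (n + 2)) k}
    {a : Fin (n + 2) → MvPowerSeries (Fin (n + 2)) k}
    (hl : (∑ i, a i * X i) ^ 2 ∈ Ipz k n s t p z + nIdeal k (n + 2) ^ 3) (v : Fin (n + 2) → k)
    (hv : ∀ j : Fin (n + 2), 2 ≤ (j : ℕ) → v j = 0) (hv1 : v 1 = 0 ∨ (p = 0 ∧ v 1 = v 0)) :
    ∑ i, v i * constantCoeff (a i) = 0 := by
  apply sum_mul_constantCoeff_eq_zero_of_X_pow_three_dvd
  rw [← Ideal.mem_span_singleton, ← Ideal.mem_comap]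
  exact sup_le (Ipz_le_comap_restrictToLine ht hst z hv hv1)
    (nIdeal_pow_le_comap_restrictToLine v 3) hl

open MvPowerSeries in
theorem stmt_9_general {k : Type*} [Field k] (n s t : ℕ)
    (ht : 3 ≤ t + 1) (hs2 : t + 2 ≤ s)
    (p : ℕ) (z : MvPowerSeries (Fin (n + 2)) k)
    (a : Fin (n + 2) → MvPowerSeries (Fin (n + 2)) k)
    (hl : (∑ i : Fin (n + 2), a i * X i) ^ 2 ∈ Ipz k n s t p z + (nIdeal k (n + 2)) ^ 3) :
    a 0 ∈ nIdeal k (n + 2) ∧ (p = 0 → a 0 ∈ nIdeal k (n + 2) ∧ a 1 ∈ nIdeal k (n + 2)) := by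
  have h10 : (1 : Fin (n + 2)) ≠ 0 := Fin.zero_lt_one.ne'
  have hne : ∀ j : Fin (n + 2), 2 ≤ (j : ℕ) → j ≠ 0 ∧ j ≠ 1 :=
    fun j hj => ⟨fun h => by simp [h] at hj, fun h => by simp [h] at hj⟩
  have hl' := sum_mul_constantCoeff_eq_zero_of_sq_mem (by omega) hs2 hl
  have ha0 : constantCoeff (a 0) = 0 := by
    simpa [Pi.single_apply] using hl' (Pi.single 0 1)
      (fun j hj => Pi.single_eq_of_ne (hne j hj).1 1) (Or.inl (Pi.single_eq_of_ne h10 1))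
  refine ⟨mem_nIdeal_of_constantCoeff_eq_zero ha0,
    fun hp => ⟨mem_nIdeal_of_constantCoeff_eq_zero ha0, mem_nIdeal_of_constantCoeff_eq_zero ?_⟩⟩
  have ha01 := hl' (Pi.single 0 1 + Pi.single 1 1)
    (fun j hj => by simp [(hne j hj).1, (hne j hj).2]) (Or.inr ⟨hp, by simp [h10]⟩)
  simpa [Pi.single_apply, add_mul, Finset.sum_add_distrib, ha0] using ha01

open MvPowerSeries in
/-- If `s ≥ t + 2` and `l = Σ aᵢ xᵢ` satisfies `l² ∈ I_{p,z} + n³`, then `a₁ ∈ n`;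
and if moreover `p = 0`, then `a₁, a₂ ∈ n`. -/
theorem stmt_9 {k : Type*} [Field k] [IsAlgClosed k] [CharZero k] (n s t : ℕ)
    (hst : t + 1 ≤ s) (ht : 3 ≤ t + 1) (hs2 : t + 2 ≤ s)
    (p : ℕ) (z : MvPowerSeries (Fin (n + 2)) k) (hz : IsUnit z)
    (a : Fin (n + 2) → MvPowerSeries (Fin (n + 2)) k)
    (hl : (∑ i : Fin (n + 2), a i * X i) ^ 2 ∈ Ipz k n s t p z + (nIdeal k (n + 2)) ^ 3) :
    a 0 ∈ nIdeal k (n + 2) ∧ (p = 0 → a 0 ∈ nIdeal k (n + 2) ∧ a 1 ∈ nIdeal k (n + 2)) :=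
  stmt_9_general n s t ht hs2 p z a hl
end

section
/- Let p ≥ 0 be an integer and z ∈ R an invertible power series. Then every monomial of total degree t+1 in the variables x₁,…,x_h, with the possible exception of x₁^{t+1}, lies in the ideal I_{p,z} + n^s. -/
/-!
Index `i` of `X i` is the paper's variable `x_{i+1}`.

Modulo `I_{p,z}` all products `x_i x_j` other than `x₁x₂` vanish, and `x_j² ≡ x₁^s ∈ n^s` for
`j ≥ 3`; hence every monomial of degree `≥ 2` involving some `x_j` with `j ≥ 3` lies in
`I_{p,z} + n^s`. The remaining monomials are `x₁^a x₂^b` with `b ≥ 1` (this excludes `x₁^{t+1}`)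
and `a + b ≥ t + 1`. For `b = 1` they are multiples of `x₁^t x₂`; for `b ≥ 2` the relation
`x₂² ≡ x₁^{p+1} x₂ + z x₁^{s-t+1}` rewrites `x₁^a x₂^b` as a monomial with smaller `x₂`-exponent
and no smaller degree, plus a term of degree `≥ s`, so induction on `b` concludes.
-/

open MvPowerSeries

theorem MvPowerSeries.monomial_one_mem_of_le {σ R : Type*} [CommSemiring R]
    {I : Ideal (MvPowerSeries σ R)} {d e : σ →₀ ℕ} (hde : d ≤ e)
    (hd : monomial d (1 : R) ∈ I) : monomial e (1 : R) ∈ I := by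
  rw [← tsub_add_cancel_of_le hde, ← one_mul (1 : R), ← monomial_mul_monomial]
  exact I.mul_mem_left _ hd

theorem Finsupp.exists_single_add_single_le {σ : Type*} {m : σ →₀ ℕ} {i : σ}
    (hi : m i ≠ 0) (hm : 2 ≤ m.degree) : ∃ j, single i 1 + single j 1 ≤ m := by
  have hsplit : single i 1 + (m - single i 1) = m :=
    add_tsub_cancel_of_le (single_le_iff.mpr (Nat.one_le_iff_ne_zero.mpr hi))
  obtain ⟨j, hj⟩ : ∃ j, (m - single i 1 : σ →₀ ℕ) j ≠ 0 := by
    by_contra! h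
    rw [show m - single i 1 = 0 from Finsupp.ext h, add_zero] at hsplit
    rw [← hsplit, degree_single] at hm
    omega
  exact ⟨j, hsplit ▸ add_le_add_right (single_le_iff.mpr (Nat.one_le_iff_ne_zero.mpr hj)) _⟩

theorem Finsupp.eq_single_add_single {σ : Type*} {m : σ →₀ ℕ} {a b : σ} (hab : a ≠ b)
    (hm : ∀ i, i ≠ a → i ≠ b → m i = 0) : m = single a (m a) + single b (m b) := by
  ext i
  by_cases ha : i = a
  · subst ha; simp [hab]
  by_cases hb : i = b
  · subst hb; simp [hab]
  simp [hm i ha hb, Ne.symm ha, Ne.symm hb]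

theorem Ideal.pow_mul_pow_mem_of_lt_add {R : Type*} [CommRing R] {J : Ideal R} {x y w : R}
    {s t p : ℕ} (hts : t ≤ s) (hxy : x ^ t * y ∈ J)
    (hy : y ^ 2 - x ^ (p + 1) * y - w * x ^ (s - t + 1) ∈ J)
    (hdeg : ∀ c d, s ≤ c + d → x ^ c * y ^ d ∈ J) :
    ∀ {a b : ℕ}, 0 < b → t < a + b → x ^ a * y ^ b ∈ J
  | _, 0, hb, _ => absurd hb (lt_irrefl 0)
  | a, 1, _, hab => by
    rw [pow_one, ← Nat.sub_add_cancel (show t ≤ a by omega), pow_add, mul_assoc]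
    exact J.mul_mem_left _ hxy
  | a, b + 2, _, hab => by
    have hrec := pow_mul_pow_mem_of_lt_add hts hxy hy hdeg (a := a + (p + 1)) (b := b + 1)
      (by omega) (by omega)
    have hfar := hdeg (s - t + 1 + a) b (by omega)
    have key : x ^ a * y ^ (b + 2) =
        x ^ a * y ^ b * (y ^ 2 - x ^ (p + 1) * y - w * x ^ (s - t + 1)) +
          x ^ (a + (p + 1)) * y ^ (b + 1) + w * (x ^ (s - t + 1 + a) * y ^ b) := by
      ring
    rw [key]
    exact add_mem (add_mem (J.mul_mem_left _ hy) hrec) (J.mul_mem_left _ hfar)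

section

variable {k : Type*} [Field k]

theorem X_mem_nIdeal {h : ℕ} (i : Fin h) : (X i : MvPowerSeries (Fin h) k) ∈ nIdeal k h :=
  Ideal.subset_span ⟨i, rfl⟩

theorem X_pow_mul_X_pow_mem_nIdeal_pow {h s c d : ℕ} (i j : Fin h) (hcd : s ≤ c + d) :
    (X i ^ c * X j ^ d : MvPowerSeries (Fin h) k) ∈ nIdeal k h ^ s :=
  Ideal.pow_le_pow_right hcd <| pow_add (nIdeal k h) c d ▸
    Ideal.mul_mem_mul (Ideal.pow_mem_pow (X_mem_nIdeal i) c) (Ideal.pow_mem_pow (X_mem_nIdeal j) d)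

variable {n s t p : ℕ} {z : MvPowerSeries (Fin (n + 2)) k}

theorem X_mul_X_mem_Ipz {i j : Fin (n + 2)} (hij : i < j) (h01 : (i, j) ≠ (0, 1)) :
    (X i * X j : MvPowerSeries (Fin (n + 2)) k) ∈ Ipz k n s t p z :=
  Ideal.subset_span (Or.inl (Or.inl ⟨i, j, hij, h01, rfl⟩))

theorem X_sq_sub_X_zero_pow_mem_Ipz {j : Fin (n + 2)} (hj : 2 ≤ (j : ℕ)) :
    (X j ^ 2 - X 0 ^ s : MvPowerSeries (Fin (n + 2)) k) ∈ Ipz k n s t p z :=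
  Ideal.subset_span (Or.inl (Or.inr ⟨j, hj, rfl⟩))

theorem X_one_sq_sub_mem_Ipz : (X 1 ^ 2 - X 0 ^ (p + 1) * X 1 - z * X 0 ^ (s - t + 1) :
    MvPowerSeries (Fin (n + 2)) k) ∈ Ipz k n s t p z :=
  Ideal.subset_span (Or.inr (Or.inl rfl))

theorem X_zero_pow_mul_X_one_mem_Ipz :
    (X 0 ^ t * X 1 : MvPowerSeries (Fin (n + 2)) k) ∈ Ipz k n s t p z :=
  Ideal.subset_span (Or.inr (Or.inr rfl))

theorem X_mul_X_mem_Ipz_sup {i : Fin (n + 2)} (hi : 2 ≤ (i : ℕ)) (j : Fin (n + 2)) :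
    (X i * X j : MvPowerSeries (Fin (n + 2)) k) ∈ Ipz k n s t p z + nIdeal k (n + 2) ^ s := by
  rcases lt_trichotomy i j with hij | rfl | hji
  · refine Submodule.mem_sup_left (X_mul_X_mem_Ipz hij fun h => ?_)
    simp [(Prod.mk.inj h).1] at hi
  · rw [← sq, ← sub_add_cancel (X i ^ 2) (X 0 ^ s)]
    exact add_mem (Submodule.mem_sup_left (X_sq_sub_X_zero_pow_mem_Ipz hi))
      (Submodule.mem_sup_right (Ideal.pow_mem_pow (X_mem_nIdeal 0) s))
  · rw [mul_comm]
    refine Submodule.mem_sup_left (X_mul_X_mem_Ipz hji fun h => ?_)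
    simp [(Prod.mk.inj h).2] at hi

theorem X_zero_pow_mul_X_one_pow_mem_Ipz_sup (hts : t ≤ s) {a b : ℕ} (hb : 0 < b)
    (hab : t < a + b) :
    (X 0 ^ a * X 1 ^ b : MvPowerSeries (Fin (n + 2)) k) ∈
      Ipz k n s t p z + nIdeal k (n + 2) ^ s :=
  Ideal.pow_mul_pow_mem_of_lt_add hts (Submodule.mem_sup_left X_zero_pow_mul_X_one_mem_Ipz)
    (Submodule.mem_sup_left X_one_sq_sub_mem_Ipz)
    (fun _ _ hcd => Submodule.mem_sup_right (X_pow_mul_X_pow_mem_nIdeal_pow 0 1 hcd)) hb hab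

end

open MvPowerSeries in
theorem stmt_11_general {k : Type*} [Field k] (n s t : ℕ)
    (hst : t + 1 ≤ s) (ht : 3 ≤ t + 1)
    (p : ℕ) (z : MvPowerSeries (Fin (n + 2)) k)
    (m : Fin (n + 2) →₀ ℕ) (hdeg : (m.sum fun _ e => e) = t + 1)
    (hne : m ≠ Finsupp.single 0 (t + 1)) :
    (monomial m 1 : MvPowerSeries (Fin (n + 2)) k) ∈
      Ipz k n s t p z + (nIdeal k (n + 2)) ^ s := by
  have hdeg : m.degree = t + 1 := hdeg
  by_cases hfar : ∃ i : Fin (n + 2), 2 ≤ (i : ℕ) ∧ m i ≠ 0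
  · obtain ⟨i, hi, hmi⟩ := hfar
    obtain ⟨j, hij⟩ := Finsupp.exists_single_add_single_le hmi (by omega)
    refine monomial_one_mem_of_le hij ?_
    rw [← one_mul (1 : k), ← monomial_mul_monomial, ← X_pow_eq, ← X_pow_eq, pow_one, pow_one]
    exact X_mul_X_mem_Ipz_sup hi j
  push Not at hfar
  have hm : m = Finsupp.single 0 (m 0) + Finsupp.single 1 (m 1) :=
    Finsupp.eq_single_add_single (by simp) fun i h0 h1 => hfar i <| by
      rw [Ne, Fin.ext_iff, Fin.val_zero] at h0
      rw [Ne, Fin.ext_iff, Fin.val_one] at h1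
      omega
  have hsum : m 0 + m 1 = t + 1 := by
    rw [hm, map_add, Finsupp.degree_single, Finsupp.degree_single] at hdeg
    exact hdeg
  have hb : 0 < m 1 := by
    refine Nat.pos_of_ne_zero fun h1 => hne ?_
    rw [hm, h1, Finsupp.single_zero, add_zero, show m 0 = t + 1 by omega]
  rw [hm, ← one_mul (1 : k), ← monomial_mul_monomial, ← X_pow_eq, ← X_pow_eq]
  exact X_zero_pow_mul_X_one_pow_mem_Ipz_sup (by omega) hb (by omega)

open MvPowerSeries in
/-- Every monomial of total degree `t + 1`, except possibly `x₁^{t+1}`, lies in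
`I_{p,z} + n^s`. -/
theorem stmt_11 {k : Type*} [Field k] [IsAlgClosed k] [CharZero k] (n s t : ℕ)
    (hst : t + 1 ≤ s) (ht : 3 ≤ t + 1)
    (p : ℕ) (z : MvPowerSeries (Fin (n + 2)) k) (hz : IsUnit z)
    (m : Fin (n + 2) →₀ ℕ) (hdeg : (m.sum fun _ e => e) = t + 1)
    (hne : m ≠ Finsupp.single 0 (t + 1)) :
    (monomial m 1 : MvPowerSeries (Fin (n + 2)) k) ∈
      Ipz k n s t p z + (nIdeal k (n + 2)) ^ s :=
  stmt_11_general n s t hst ht p z m hdeg hne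
end

section
/- Assume s ≥ 2t, let r be an integer with 1 ≤ r ≤ t−2 and 2(r+1) = s−t+1, and let w ∈ R be an invertible power series. If a, b ∈ R satisfy a·x₁^{r+1} x₂ + b·x₁^{s−t+1} ∈ I_{r,w} + n^{3r+2}, then a lies in the ideal (x₁^{t−r−1}) + (x₂,…,x_h) and b lies in the ideal (x₁^r) + (x₂,…,x_h). -/
/-!
Write the hypothesis as `a x₁^{r+1} x₂ + b x₁^{2r+2} = P + f q + g x₁^t x₂ + E`, where
`q = x₂² - x₁^{r+1} x₂ - w x₁^{2r+2}`, `P` lies in the ideal of the generators `x_i x_j` and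
`x_j² - x₁^s`, and `E ∈ n^{3r+2}`. Since `s > 3r + 2`, neither `P` nor `E` has a monomial
`x₁^α x₂^β` with `α + β < 3r + 2`, so the coefficients of such monomials give linear relations
between those of `a, b, f, g`. Along the `x₁`-axis, the monomials `x₁^j x₂²` (`j ≤ r`) force
`f ≡ 0 mod x₁^{r+1}`; then `x₁^{r+1+j} x₂` (`j < t - r - 1 ≤ r`) and `x₁^{2r+2+j}` (`j < r`)
force `a ≡ 0 mod x₁^{t-r-1}` and `b ≡ 0 mod x₁^r`. Finally, a series whose restriction to the
`x₁`-axis is divisible by `x₁^m` lies in `(x₁^m) + (x₂, …, x_h)`.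
-/

open MvPowerSeries Finsupp

theorem Finsupp.coe_support_subset_singleton {σ : Type*} {d : σ →₀ ℕ} {i : σ} :
    (d.support : Set σ) ⊆ {i} ↔ d = single i (d i) := by
  rw [← Finset.coe_singleton, Finset.coe_subset, support_subset_singleton]

namespace MvPowerSeries

section

variable {σ R : Type*} [CommSemiring R]

theorem coeff_mul_eq_zero_of_degree_lt {T : Set σ} {M N : ℕ} {f g : MvPowerSeries σ R}
    (hf : ∀ d : σ →₀ ℕ, (d.support : Set σ) ⊆ T → degree d < M → coeff d f = 0)
    (hg : ∀ d : σ →₀ ℕ, (d.support : Set σ) ⊆ T → degree d < N → coeff d g = 0)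
    (d : σ →₀ ℕ) (hT : (d.support : Set σ) ⊆ T) (hd : degree d < M + N) : coeff d (f * g) = 0 := by
  classical
  rw [coeff_mul]
  refine Finset.sum_eq_zero fun p hp => ?_
  rw [Finset.HasAntidiagonal.mem_antidiagonal] at hp
  have hdeg : degree p.1 + degree p.2 = degree d := by rw [← map_add, hp]
  have hsupp (e : σ →₀ ℕ) (he : e ≤ d) : (e.support : Set σ) ⊆ T :=
    (Finset.coe_subset.2 (support_mono he)).trans hT
  by_cases h1 : degree p.1 < M
  · rw [hf p.1 (hsupp _ (hp ▸ le_self_add)) h1, zero_mul]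
  · rw [hg p.2 (hsupp _ (hp ▸ le_add_self)) (by omega), mul_zero]

def lowDegreeIdeal (T : Set σ) (N : ℕ) : Ideal (MvPowerSeries σ R) where
  carrier := {f | ∀ d : σ →₀ ℕ, (d.support : Set σ) ⊆ T → degree d < N → coeff d f = 0}
  add_mem' hf hg d hT hd := by rw [map_add, hf d hT hd, hg d hT hd, add_zero]
  zero_mem' _ _ _ := map_zero _
  smul_mem' c f hf := by
    simpa using coeff_mul_eq_zero_of_degree_lt (f := c) (g := f) (M := 0)
      (fun _ _ h => absurd h (Nat.not_lt_zero _)) hf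

variable {T : Set σ} {M N : ℕ}

theorem lowDegreeIdeal_antitone : Antitone (lowDegreeIdeal (R := R) T) :=
  fun _ _ h _ hf d hT hd => hf d hT (hd.trans_le h)

theorem lowDegreeIdeal_mul_le :
    lowDegreeIdeal T M * lowDegreeIdeal T N ≤
      (lowDegreeIdeal T (M + N) : Ideal (MvPowerSeries σ R)) :=
  Ideal.mul_le.2 fun _ hf _ hg => coeff_mul_eq_zero_of_degree_lt hf hg

theorem X_mem_lowDegreeIdeal_one (i : σ) : (X i : MvPowerSeries σ R) ∈ lowDegreeIdeal T 1 := by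
  classical
  intro d _ hd
  rw [Nat.lt_one_iff, degree_eq_zero_iff] at hd
  rw [hd, coeff_X, if_neg (by simpa using (single_ne_zero.2 one_ne_zero).symm)]

theorem pow_le_lowDegreeIdeal {I : Ideal (MvPowerSeries σ R)} (hI : I ≤ lowDegreeIdeal T 1) :
    ∀ N, I ^ N ≤ lowDegreeIdeal T N
  | 0 => fun _ _ _ _ hd => absurd hd (Nat.not_lt_zero _)
  | N + 1 => by
    rw [pow_succ]
    exact (Ideal.mul_mono (pow_le_lowDegreeIdeal hI N) hI).trans lowDegreeIdeal_mul_le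

theorem mem_lowDegreeIdeal_singleton {i : σ} {f : MvPowerSeries σ R} :
    f ∈ lowDegreeIdeal {i} N ↔ ∀ j < N, coeff (single i j) f = 0 := by
  refine ⟨fun hf j hj => hf _ (coe_support_subset_singleton.2 (by simp)) (by rwa [degree_single]),
    fun hf d hT hd => ?_⟩
  rw [coe_support_subset_singleton.1 hT] at hd ⊢
  exact hf _ (by rwa [degree_single] at hd)

theorem coeff_single_add_single_mul_X_pow_mul_X_pow {i j : σ} (hij : i ≠ j)
    (φ : MvPowerSeries σ R) (α β γ δ : ℕ) :
    coeff (single i α + single j β) (φ * (X i ^ γ * X j ^ δ)) =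
      if γ ≤ α ∧ δ ≤ β then coeff (single i (α - γ) + single j (β - δ)) φ else 0 := by
  classical
  have hle : single i γ + single j δ ≤ single i α + single j β ↔ γ ≤ α ∧ δ ≤ β := by
    refine ⟨fun h => ⟨?_, ?_⟩, fun h l => ?_⟩
    · simpa [hij] using h i
    · simpa [hij.symm] using h j
    · simp only [coe_add, Pi.add_apply, single_apply]
      split_ifs <;> simp_all
  have hsub : single i α + single j β - (single i γ + single j δ) =
      single i (α - γ) + single j (β - δ) := by
    ext l
    simp only [coe_tsub, coe_add, Pi.sub_apply, Pi.add_apply, single_apply]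
    split_ifs <;> simp_all
  rw [X_pow_eq, X_pow_eq, monomial_mul_monomial, one_mul, coeff_mul_monomial, mul_one]
  simp only [hle, hsub]

theorem coeff_single_add_single_eq_zero {i j : σ} {N α β : ℕ} {f : MvPowerSeries σ R}
    (hf : f ∈ lowDegreeIdeal {i, j} N) (h : α + β < N) :
    coeff (single i α + single j β) f = 0 := by
  classical
  refine hf _ ?_ (by rwa [map_add, degree_single, degree_single])
  refine (Finset.coe_subset.2 support_add).trans ?_
  simp only [Finset.coe_union, Set.union_subset_iff]
  constructor <;> refine (Finset.coe_subset.2 support_single_subset).trans ?_ <;> simp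

end

section

variable {σ R : Type*} [CommRing R]

theorem mem_ideal_span_X_image_of_coeff (S : Finset σ) {g : MvPowerSeries σ R}
    (hg : ∀ d, coeff d g ≠ 0 → ∃ i ∈ S, d i ≠ 0) : g ∈ Ideal.span (X '' ↑S) := by
  classical
  induction S using Finset.induction_on generalizing g with
  | empty =>
    have : g = 0 := by
      ext d
      by_contra hd
      simpa using hg d hd
    simp [this]
  | insert i S _ ih =>
    let φ : MvPowerSeries σ R := fun d => if d i = 0 then coeff d g else 0
    have hφ_coeff (d) : coeff d φ = if d i = 0 then coeff d g else 0 := rfl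
    have hdvd : X i ∣ g - φ := X_dvd_iff.2 fun d hd => by
      rw [map_sub, hφ_coeff, if_pos hd, sub_self]
    have hφ : φ ∈ Ideal.span (X '' ↑S) := ih fun d hd => by
      by_cases hdi : d i = 0
      · obtain ⟨j, hj, hdj⟩ := hg d (by rwa [hφ_coeff, if_pos hdi] at hd)
        rcases Finset.mem_insert.1 hj with rfl | hj
        · exact absurd hdi hdj
        · exact ⟨j, hj, hdj⟩
      · exact absurd (by rw [hφ_coeff, if_neg hdi]) hd
    rw [← sub_add_cancel g φ]
    refine add_mem (Ideal.span_mono ?_ (Ideal.mem_span_singleton.2 hdvd)) (Ideal.span_mono ?_ hφ)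
    · simp
    · exact Set.image_mono (by simp)

theorem lowDegreeIdeal_singleton_le [Finite σ] (i : σ) (m : ℕ) :
    lowDegreeIdeal {i} m ≤
      Ideal.span {(X i : MvPowerSeries σ R) ^ m} ⊔ Ideal.span (X '' {j | j ≠ i}) := by
  classical
  intro c hc
  let φ : MvPowerSeries σ R := fun d => if d = single i (d i) then coeff d c else 0
  have hφ_coeff (d) : coeff d φ = if d = single i (d i) then coeff d c else 0 := rfl
  have hdvd : X i ^ m ∣ φ := X_pow_dvd_iff.2 fun d hd => by
    rw [hφ_coeff]
    split_ifs with h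
    · exact hc d (coe_support_subset_singleton.2 h) (by rwa [h, degree_single])
    · rfl
  have hrest : c - φ ∈ Ideal.span (X '' {j | j ≠ i}) := by
    simpa using mem_ideal_span_X_image_of_coeff (Set.toFinite {j | j ≠ i}).toFinset
      (g := c - φ) fun d hd => by
        rw [map_sub, hφ_coeff] at hd
        split_ifs at hd with h
        · exact absurd (sub_self _) hd
        · by_contra! h'
          refine h (Finsupp.ext fun j => ?_)
          by_cases hj : j = i
          · simp [hj]
          · simp [Ne.symm hj, h' j (by simpa using hj)]
  rw [← add_sub_cancel φ c]
  exact Submodule.add_mem_sup (Ideal.mem_span_singleton.2 hdvd) hrest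

end

end MvPowerSeries

section

variable {R : Type*} [CommRing R] {n : ℕ}

theorem span_X_mul_X_and_X_sq_sub_le_lowDegreeIdeal (s : ℕ) :
    Ideal.span ({f | ∃ i j : Fin (n + 2), i < j ∧ (i, j) ≠ (0, 1) ∧ f = X i * X j} ∪
      {f | ∃ j : Fin (n + 2), 2 ≤ (j : ℕ) ∧
        f = (X j : MvPowerSeries (Fin (n + 2)) R) ^ 2 - X 0 ^ s}) ≤ lowDegreeIdeal {0, 1} s := by
  classical
  have h01 {j : Fin (n + 2)} (hj : 2 ≤ (j : ℕ)) : j ∉ ({0, 1} : Set (Fin (n + 2))) := by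
    simp only [Set.mem_insert_iff, Set.mem_singleton_iff, Fin.ext_iff, Fin.val_zero, Fin.val_one]
    omega
  rw [Ideal.span_le]
  rintro f (⟨i, j, hij, hne, rfl⟩ | ⟨j, hj, rfl⟩) d hT hd
  · have hj : 2 ≤ (j : ℕ) := by
      by_contra! hj
      refine hne (Prod.ext ?_ ?_) <;> simp only [Fin.ext_iff, Fin.val_zero, Fin.val_one] <;>
        have := Fin.lt_def.1 hij <;> omega
    rw [X, X, monomial_mul_monomial, coeff_monomial, if_neg]
    rintro rfl
    exact h01 hj (hT (by simp [hij.ne]))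
  · rw [map_sub, X_pow_eq, X_pow_eq, coeff_monomial, coeff_monomial, if_neg, if_neg, sub_zero]
    · rintro rfl
      simp at hd
    · rintro rfl
      exact h01 hj (hT (by simp))

end

section

variable {k : Type*} [Field k] {n : ℕ}

theorem lowDegreeIdeal_le_span_X_zero_pow_add_offIdeal (m : ℕ) :
    lowDegreeIdeal {0} m ≤
      Ideal.span {(X 0 : MvPowerSeries (Fin (n + 2)) k) ^ m} + offIdeal k n := by
  have hoff : offIdeal k n = Ideal.span (X '' {i | i ≠ 0}) := by
    rw [offIdeal]
    congr 1
    ext f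
    simp [eq_comm]
  rw [hoff]
  exact lowDegreeIdeal_singleton_le 0 m

theorem exists_sub_mem_lowDegreeIdeal_of_mem_Ipz_add_pow {s t p N : ℕ}
    {z x : MvPowerSeries (Fin (n + 2)) k} (hN : N ≤ s)
    (hx : x ∈ Ipz k n s t p z + nIdeal k (n + 2) ^ N) :
    ∃ f g, x - f * (X 1 ^ 2 - X 0 ^ (p + 1) * X 1 - z * X 0 ^ (s - t + 1)) -
      g * (X 0 ^ t * X 1) ∈ lowDegreeIdeal {0, 1} N := by
  obtain ⟨P, hP, E, hE, rfl⟩ := Submodule.mem_sup.1 hx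
  rw [Ipz, Iy, Ideal.span_union, Submodule.mem_sup] at hP
  obtain ⟨P₁, hP₁, P₂, hP₂, rfl⟩ := hP
  obtain ⟨f, g, rfl⟩ := Ideal.mem_span_pair.1 hP₂
  refine ⟨f, g, ?_⟩
  have hn : nIdeal k (n + 2) ≤ lowDegreeIdeal {0, 1} 1 :=
    Ideal.span_le.2 (Set.range_subset_iff.2 X_mem_lowDegreeIdeal_one)
  convert add_mem (lowDegreeIdeal_antitone hN (span_X_mul_X_and_X_sq_sub_le_lowDegreeIdeal s hP₁))
    (pow_le_lowDegreeIdeal hn N hE) using 1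
  ring

end

open MvPowerSeries in
theorem stmt_15_general {k : Type*} [Field k] (n s t : ℕ)
    (h2t : 2 * t ≤ s)
    (r : ℕ) (hr1 : 1 ≤ r) (hr2 : r ≤ t - 2) (hr3 : 2 * (r + 1) = s - t + 1)
    (w : MvPowerSeries (Fin (n + 2)) k)
    (a b : MvPowerSeries (Fin (n + 2)) k)
    (hab : a * X 0 ^ (r + 1) * X 1 + b * X 0 ^ (s - t + 1) ∈
      Ipz k n s t r w + (nIdeal k (n + 2)) ^ (3 * r + 2)) :
    a ∈ Ideal.span {(X 0 : MvPowerSeries (Fin (n + 2)) k) ^ (t - r - 1)} + offIdeal k n ∧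
    b ∈ Ideal.span {(X 0 : MvPowerSeries (Fin (n + 2)) k) ^ r} + offIdeal k n := by
  obtain ⟨f, g, hfg⟩ := exists_sub_mem_lowDegreeIdeal_of_mem_Ipz_add_pow (by omega) hab
  rw [← hr3] at hfg
  -- exponents `0` and `1` are written out so that
  -- `coeff_single_add_single_mul_X_pow_mul_X_pow` applies to every term
  have hcoeff (α β : ℕ) (h : α + β < 3 * r + 2) : coeff (single 0 α + single 1 β)
      (a * (X 0 ^ (r + 1) * X 1 ^ 1) + b * (X 0 ^ (2 * (r + 1)) * X 1 ^ 0) -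
        f * (X 0 ^ 0 * X 1 ^ 2) + f * (X 0 ^ (r + 1) * X 1 ^ 1) +
        f * w * (X 0 ^ (2 * (r + 1)) * X 1 ^ 0) - g * (X 0 ^ t * X 1 ^ 1)) = 0 := by
    convert coeff_single_add_single_eq_zero hfg h using 2
    ring
  simp only [map_add, map_sub, coeff_single_add_single_mul_X_pow_mul_X_pow zero_ne_one] at hcoeff
  have hf : f ∈ lowDegreeIdeal {0} (r + 1) := mem_lowDegreeIdeal_singleton.2 fun j hj => by
    simpa (disch := omega) only [if_pos, if_neg, Nat.sub_zero, Nat.sub_self, single_zero, add_zero,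
      zero_add, sub_zero, zero_sub, neg_eq_zero] using hcoeff j 2 (by omega)
  have ha : a ∈ lowDegreeIdeal {0} (t - r - 1) := mem_lowDegreeIdeal_singleton.2 fun j hj => by
    simpa (disch := omega) only [if_pos, if_neg, Nat.add_sub_cancel_left, Nat.sub_self, single_zero,
      add_zero, sub_zero, mem_lowDegreeIdeal_singleton.1 hf] using hcoeff (r + 1 + j) 1 (by omega)
  have hb : b ∈ lowDegreeIdeal {0} r := mem_lowDegreeIdeal_singleton.2 fun j hj => by
    simpa (disch := omega) only [if_pos, if_neg, Nat.add_sub_cancel_left, Nat.sub_self, single_zero,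
      add_zero, zero_add, sub_zero, mem_lowDegreeIdeal_singleton.1 (Ideal.mul_mem_right w _ hf)]
      using hcoeff (2 * (r + 1) + j) 0 (by omega)
  exact ⟨lowDegreeIdeal_le_span_X_zero_pow_add_offIdeal _ ha,
    lowDegreeIdeal_le_span_X_zero_pow_add_offIdeal _ hb⟩

open MvPowerSeries in
/-- If `s ≥ 2t`, `1 ≤ r ≤ t - 2`, `2(r+1) = s - t + 1`, `w` is invertible and
`a·x₁^{r+1} x₂ + b·x₁^{s-t+1} ∈ I_{r,w} + n^{3r+2}`, then
`a ∈ (x₁^{t-r-1}) + (x₂,…,x_h)` and `b ∈ (x₁^r) + (x₂,…,x_h)`. -/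
theorem stmt_15 {k : Type*} [Field k] [IsAlgClosed k] [CharZero k] (n s t : ℕ)
    (hst : t + 1 ≤ s) (ht : 3 ≤ t + 1) (h2t : 2 * t ≤ s)
    (r : ℕ) (hr1 : 1 ≤ r) (hr2 : r ≤ t - 2) (hr3 : 2 * (r + 1) = s - t + 1)
    (w : MvPowerSeries (Fin (n + 2)) k) (hw : IsUnit w)
    (a b : MvPowerSeries (Fin (n + 2)) k)
    (hab : a * X 0 ^ (r + 1) * X 1 + b * X 0 ^ (s - t + 1) ∈
      Ipz k n s t r w + (nIdeal k (n + 2)) ^ (3 * r + 2)) :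
    a ∈ Ideal.span {(X 0 : MvPowerSeries (Fin (n + 2)) k) ^ (t - r - 1)} + offIdeal k n ∧
    b ∈ Ideal.span {(X 0 : MvPowerSeries (Fin (n + 2)) k) ^ r} + offIdeal k n :=
  stmt_15_general n s t h2t r hr1 hr2 hr3 w a b hab
end

section
/- Assume s ≥ 2t and let r be an integer with 1 ≤ r ≤ t−2 and 2(r+1) = s−t+1. Let z, w ∈ R be invertible power series, and suppose y₁,…,y_h ∈ n generate n and I_{r,z} = φ_y(I_{r,w}), i.e. I_{r,z} is the ideal generated by: y_i y_j for 1 ≤ i < j ≤ h with (i,j) ≠ (1,2); y_j² − y₁^s for 3 ≤ j ≤ h; y₂² − y₁^{r+1} y₂ − φ_y(w)·y₁^{s−t+1}; and y₁^t y₂. Then z − φ_y(w) lies in the ideal (x₁^{t−r−1}) + (x₂,…,x_h). -/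
/-!
Write `x₁, x₂` for `X 0, X 1`, kill `x₃, …, x_h` and view series in `k⟦x₁⟧⟦x₂⟧`. The image `J`
of `I_{r,z}` is generated by `Q = x₂² - x₁^{r+1} x₂ - z x₁^{2r+2}`, `x₁^s` and `x₁^t x₂`, so if
`F ≡ A Q` modulo `(x₁^s, x₁^t x₂)`, the first `x₂`-coefficients of `F` and `A Q` agree modulo
`x₁^s` or `x₁^t`. As `I_{r,z} = φ_y(I_{r,w})`, the generators written in `y` lie in `I_{r,z}`.

First order: `y_j² - y₁^s` and `Q_y` show that no linear part of `y₂, …, y_h` involves `x₁`, so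
`y₁(x₁, 0) = x₁ p` with `p` a unit; then `y₁ y_j` shows that no linear part of `y₃, …, y_h`
involves `x₂`, so the `x₂`-coefficient `d` of `y₂` is a unit.

Comparing coefficients for `y₁^t y₂ ∈ J` gives `x₁^{2r+1} ∣ y₂(x₁, 0)`. Then for `Q_y ≡ A Q` and
`a = A(x₁, 0)` the `x₂⁰, x₂¹, x₂²`-coefficients give, modulo `x₁^{t-r-1}` on the `x₁`-axis,
`a z ≡ φ(w) p^{2r+2}`, `a ≡ p^{r+1} d` and `a ≡ d²`. Hence `d ≡ p^{r+1}` and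
`p^{2r+2} (z - φ(w)) ≡ 0` on the `x₁`-axis, which is the claim.
-/

theorem pow_dvd_of_pow_add_dvd_pow_mul {M : Type*} [CommMonoidWithZero M] [IsCancelMulZero M]
    {a b : M} (ha : a ≠ 0) {m n : ℕ} (h : a ^ (m + n) ∣ a ^ m * b) : a ^ n ∣ b := by
  rwa [pow_add, mul_dvd_mul_iff_left (pow_ne_zero _ ha)] at h

namespace MvPowerSeries

theorem mem_span_X_image_of_coeff_eq_zero_s16 {σ R : Type*} [CommRing R] (S : Finset σ)
    {g : MvPowerSeries σ R} (hg : ∀ d : σ →₀ ℕ, (∀ i ∈ S, d i = 0) → coeff d g = 0) :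
    g ∈ Ideal.span (X '' S) := by
  classical
  induction S using Finset.induction_on generalizing g with
  | empty =>
    rw [show g = 0 from ext fun d => by simpa using hg d]
    exact zero_mem _
  | insert a S ha ih =>
    let g' : MvPowerSeries σ R := fun d => if d a = 0 then coeff d g else 0
    have hg' : ∀ d, coeff d g' = if d a = 0 then coeff d g else 0 := fun _ => rfl
    have h_div : X a ∣ g - g' := X_dvd_iff.mpr fun d hd => by simp [hg', hd]
    have h_mem : g' ∈ Ideal.span (X '' S) := ih fun d hd => by
      rw [hg']
      split_ifs with hda
      · exact hg d (by simpa [hda] using hd)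
      · rfl
    rw [← sub_add_cancel g g']
    refine add_mem ?_ (Ideal.span_mono (Set.image_mono (by simp)) h_mem)
    obtain ⟨q, hq⟩ := h_div
    rw [hq]
    exact Ideal.mul_mem_right _ _ (Ideal.subset_span ⟨a, by simp, rfl⟩)

theorem coeff_single_mul_of_constantCoeff_eq_zero {σ R : Type*} [CommRing R] (l : σ)
    (c : MvPowerSeries σ R) {f : MvPowerSeries σ R} (hf : constantCoeff f = 0) :
    coeff (Finsupp.single l 1) (c * f) = constantCoeff c * coeff (Finsupp.single l 1) f := by
  classical
  rw [coeff_mul, Finsupp.antidiagonal_single]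
  simp [Finset.Nat.antidiagonal_succ, hf]

section SpanEq

variable {σ ι K : Type*} [Field K] {y : ι → MvPowerSeries σ K}

theorem constantCoeff_eq_zero_of_span_eq
    (hy : Ideal.span (Set.range y) = Ideal.span (Set.range X)) (i : ι) :
    constantCoeff (y i) = 0 := by
  have : Ideal.span (Set.range (X : σ → MvPowerSeries σ K)) ≤ RingHom.ker constantCoeff :=
    Ideal.span_le.mpr (by rintro _ ⟨l, rfl⟩; simp)
  exact this (hy ▸ Ideal.subset_span ⟨i, rfl⟩)

theorem exists_sum_eq_coeff_X [Fintype ι]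
    (hy : Ideal.span (Set.range y) = Ideal.span (Set.range X)) (j : σ) :
    ∃ c : ι → MvPowerSeries σ K, ∀ l,
      ∑ i, constantCoeff (c i) * coeff (Finsupp.single l 1) (y i) =
        coeff (Finsupp.single l 1) (X j : MvPowerSeries σ K) := by
  have hj : (X j : MvPowerSeries σ K) ∈ Ideal.span (Set.range y) :=
    hy ▸ Ideal.subset_span ⟨j, rfl⟩
  obtain ⟨c, hc⟩ := (Submodule.mem_span_range_iff_exists_fun (MvPowerSeries σ K)).mp hj
  refine ⟨c, fun l => ?_⟩
  simp only [← hc, smul_eq_mul, map_sum,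
    coeff_single_mul_of_constantCoeff_eq_zero l _ (constantCoeff_eq_zero_of_span_eq hy _)]

theorem coeff_single_ne_zero_of_span_eq [Fintype ι]
    (hy : Ideal.span (Set.range y) = Ideal.span (Set.range X)) {l : σ} {i₀ : ι}
    (h : ∀ i ≠ i₀, coeff (Finsupp.single l 1) (y i) = 0) :
    coeff (Finsupp.single l 1) (y i₀) ≠ 0 := by
  classical
  obtain ⟨c, hc⟩ := exists_sum_eq_coeff_X hy l
  intro h₀
  have := hc l
  rw [Fintype.sum_eq_single i₀ fun i hi => by rw [h i hi, mul_zero], h₀, mul_zero] at this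
  simp at this

theorem coeff_single_ne_zero_of_span_eq_of_triangular [Fintype ι]
    (hy : Ideal.span (Set.range y) = Ideal.span (Set.range X)) {l₀ l₁ : σ} (hl : l₀ ≠ l₁)
    {i₀ i₁ : ι} (h₀ : ∀ i ≠ i₀, coeff (Finsupp.single l₀ 1) (y i) = 0)
    (h₁ : ∀ i, i ≠ i₀ → i ≠ i₁ → coeff (Finsupp.single l₁ 1) (y i) = 0) :
    coeff (Finsupp.single l₁ 1) (y i₁) ≠ 0 := by
  classical
  obtain ⟨c, hc⟩ := exists_sum_eq_coeff_X hy l₁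
  have hc₀ : constantCoeff (c i₀) = 0 := by
    have := hc l₀
    rw [Fintype.sum_eq_single i₀ fun i hi => by rw [h₀ i hi, mul_zero]] at this
    simpa [coeff_X, Finsupp.single_left_inj one_ne_zero, hl,
      coeff_single_ne_zero_of_span_eq hy h₀] using this
  intro hb
  have := hc l₁
  rw [Fintype.sum_eq_single i₁ fun i hi => ?_, hb, mul_zero] at this
  · simp at this
  · by_cases hi₀ : i = i₀
    · rw [hi₀, hc₀, zero_mul]
    · rw [h₁ i hi₀ hi, mul_zero]

end SpanEq

end MvPowerSeries

namespace PowerSeries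

section Weight

variable {B : Type*} [CommSemiring B] {x : B}

/-- For `B = k⟦x⟧` this says that `F` lies in the `m`-th power of the ideal `(x, X)`. -/
def HasWeight (x : B) (m : ℕ) (F : B⟦X⟧) : Prop := ∀ k, x ^ (m - k) ∣ coeff k F

theorem HasWeight.mul {m m' : ℕ} {F G : B⟦X⟧} (hF : HasWeight x m F) (hG : HasWeight x m' G) :
    HasWeight x (m + m') (F * G) := fun k => by
  rw [coeff_mul]
  refine Finset.dvd_sum fun ij hij => ?_
  rw [Finset.HasAntidiagonal.mem_antidiagonal] at hij
  exact (pow_dvd_pow x (by omega)).trans (pow_add x _ _ ▸ mul_dvd_mul (hF ij.1) (hG ij.2))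

theorem HasWeight.pow {m : ℕ} {F : B⟦X⟧} (hF : HasWeight x m F) (j : ℕ) :
    HasWeight x (m * j) (F ^ j) := by
  induction j with
  | zero => intro k; simp
  | succ j ih => simpa [pow_succ, mul_add] using ih.mul hF

theorem hasWeight_zero (F : B⟦X⟧) : HasWeight x 0 F := fun k => by simp

theorem hasWeight_one {F : B⟦X⟧} (hF : x ∣ constantCoeff F) : HasWeight x 1 F
  | 0 => by simpa using hF
  | k + 1 => by simp

end Weight

theorem coeff_two_mul {B : Type*} [CommSemiring B] (F G : B⟦X⟧) :
    coeff 2 (F * G) =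
      constantCoeff F * coeff 2 G + coeff 1 F * coeff 1 G + coeff 2 F * constantCoeff G := by
  simp [coeff_mul, Finset.Nat.sum_antidiagonal_succ, add_assoc]

section TwoVarIdeal

variable {B : Type*} [CommRing B] (x : B)

noncomputable def quadric (p e : ℕ) (Z : B⟦X⟧) : B⟦X⟧ :=
  X ^ 2 - C (x ^ (p + 1)) * X - Z * C (x ^ e)

/-- For `B = k⟦x₁⟧`, `X = x₂` and `e = s - t + 1`, the image of `I_{p,z}` under `toTwoVars`. -/
noncomputable def twoVarIdeal (s t p e : ℕ) (Z : B⟦X⟧) : Ideal B⟦X⟧ :=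
  Ideal.span {quadric x p e Z, C (x ^ s), C (x ^ t) * X}

variable {x}

theorem coeff_dvd_of_mem_span_pair {s t : ℕ} (hts : t ≤ s) {F : B⟦X⟧}
    (hF : F ∈ Ideal.span {C (x ^ s), C (x ^ t) * X}) :
    x ^ s ∣ constantCoeff F ∧ ∀ k, x ^ t ∣ coeff (k + 1) F := by
  obtain ⟨c, d, rfl⟩ := Ideal.mem_span_pair.mp hF
  rw [show c * C (x ^ s) + d * (C (x ^ t) * X) = C (x ^ s) * c + C (x ^ t) * (d * X) by ring]
  simp only [map_add, map_mul, constantCoeff_C, constantCoeff_X, coeff_C_mul, coeff_succ_mul_X,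
    mul_zero, add_zero]
  exact ⟨dvd_mul_right _ _,
    fun k => dvd_add ((pow_dvd_pow x hts).mul_right _) (dvd_mul_right _ _)⟩

theorem coeff_mul_quadric (p e : ℕ) (A Z : B⟦X⟧) :
    constantCoeff (A * quadric x p e Z) = -(x ^ e * constantCoeff Z * constantCoeff A) ∧
    coeff 1 (A * quadric x p e Z) = -(x ^ (p + 1) * constantCoeff A) - x ^ e * coeff 1 (A * Z) ∧
    ∀ k, coeff (k + 2) (A * quadric x p e Z) =
      coeff k A - x ^ (p + 1) * coeff (k + 1) A - x ^ e * coeff (k + 2) (A * Z) := by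
  have hAQ : A * quadric x p e Z =
      A * X ^ 2 - C (x ^ (p + 1)) * (A * X) - C (x ^ e) * (A * Z) := by
    rw [quadric]; ring
  simp only [hAQ, map_sub, coeff_C_mul, coeff_mul_X_pow, coeff_succ_mul_X]
  refine ⟨?_, ?_, fun _ => trivial⟩
  · simp [mul_comm A]; ring
  · simp [coeff_mul_X_pow']

theorem exists_coeff_dvd_of_mem_twoVarIdeal {s t p e : ℕ} (hts : t ≤ s) (hte : t ≤ e)
    {Z F : B⟦X⟧} (hF : F ∈ twoVarIdeal x s t p e Z) :
    ∃ A : B⟦X⟧, x ^ s ∣ constantCoeff F + x ^ e * constantCoeff Z * constantCoeff A ∧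
      x ^ t ∣ coeff 1 F + x ^ (p + 1) * constantCoeff A ∧
      ∀ k, x ^ t ∣ coeff (k + 2) F - coeff k A + x ^ (p + 1) * coeff (k + 1) A := by
  obtain ⟨A, N, hN, rfl⟩ := Ideal.mem_span_insert.mp hF
  obtain ⟨hN₀, hN⟩ := coeff_dvd_of_mem_span_pair hts hN
  obtain ⟨hQ₀, hQ₁, hQ⟩ := coeff_mul_quadric p e A Z
  have hte' : x ^ t ∣ x ^ e := pow_dvd_pow x hte
  refine ⟨A, ?_, ?_, fun k => ?_⟩
  · convert hN₀ using 1
    rw [map_add, hQ₀]; ring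
  · convert dvd_sub (hN 0) (hte'.mul_right (coeff 1 (A * Z))) using 1
    rw [map_add, hQ₁]; ring
  · convert dvd_sub (hN (k + 1)) (hte'.mul_right (coeff (k + 2) (A * Z))) using 1
    rw [map_add, hQ]; ring

theorem X_pow_three_dvd_constantCoeff_of_mem {s t p e : ℕ} (hts : t ≤ s) (hte : t ≤ e)
    (hs : 3 ≤ s) (he : 3 ≤ e) {Z F : B⟦X⟧} (hF : F ∈ twoVarIdeal x s t p e Z) :
    x ^ 3 ∣ constantCoeff F := by
  obtain ⟨A, h₀, -⟩ := exists_coeff_dvd_of_mem_twoVarIdeal hts hte hF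
  refine (dvd_add_left ?_).mp ((pow_dvd_pow x hs).trans h₀)
  exact ((pow_dvd_pow x he).mul_right _).mul_right _

theorem X_sq_dvd_coeff_one_of_mem {s t p e : ℕ} (hts : t ≤ s) (hte : t ≤ e) (ht : 2 ≤ t)
    (hp : 1 ≤ p) {Z F : B⟦X⟧} (hF : F ∈ twoVarIdeal x s t p e Z) : x ^ 2 ∣ coeff 1 F := by
  obtain ⟨A, -, h₁, -⟩ := exists_coeff_dvd_of_mem_twoVarIdeal hts hte hF
  refine (dvd_add_left ?_).mp ((pow_dvd_pow x ht).trans h₁)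
  exact (pow_dvd_pow x (by omega)).mul_right _

end TwoVarIdeal

section Estimates

variable {K : Type*} [Field K] {s t r : ℕ} {u v W Z : K⟦X⟧⟦X⟧} {p a : K⟦X⟧}

local notation "x" => (X : K⟦X⟧)

theorem X_sq_dvd_of_X_pow_three_dvd_sq {f : K⟦X⟧} (h : x ^ 3 ∣ f ^ 2) : x ^ 2 ∣ f := by
  obtain ⟨g, rfl⟩ := X_prime.dvd_of_dvd_pow ((dvd_pow_self x (by norm_num)).trans h)
  have hg : x ^ (2 + 1) ∣ x ^ 2 * g ^ 2 := by rw [mul_pow] at h; exact h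
  simpa [pow_two] using mul_dvd_mul_left x
    (X_prime.dvd_of_dvd_pow (pow_one x ▸ pow_dvd_of_pow_add_dvd_pow_mul X_ne_zero hg))

theorem exists_X_mul_of_coeff_one_ne_zero {f : K⟦X⟧} (h : x ∣ f) (h₁ : coeff 1 f ≠ 0) :
    ∃ p, f = x * p ∧ IsUnit p := by
  obtain ⟨p, rfl⟩ := h
  refine ⟨p, rfl, isUnit_iff_constantCoeff.mpr (isUnit_iff_ne_zero.mpr ?_)⟩
  simpa [coeff_succ_X_mul] using h₁

/- Below, `u, v, W, Z` stand for the images of `y₁, y₂, φ(w), z`, with `u(x₁, 0) = x₁ p`. -/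

theorem X_pow_dvd_constantCoeff_of_pow_mul_mem (hs : s = t + 2 * r + 1) (hrt : r + 1 ≤ t)
    (ht : t ≤ 2 * r + 1) (hu : constantCoeff u = x * p) (hp : IsUnit p)
    (hv : x ∣ constantCoeff v) (hK : u ^ t * v ∈ twoVarIdeal x s t r (2 * r + 2) Z) :
    x ^ (2 * r + 1) ∣ constantCoeff v := by
  obtain ⟨A, h₀, -, h⟩ := exists_coeff_dvd_of_mem_twoVarIdeal (by omega) (by omega) hK
  have h₂ := h 0
  have h₃ := h 1
  simp only [zero_add, Nat.reduceAdd, coeff_zero_eq_constantCoeff_apply] at h₂ h₃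
  have hw : HasWeight x (t + 1) (u ^ t * v) := by
    simpa using ((hasWeight_one (hu ▸ dvd_mul_right x p)).pow t).mul (hasWeight_one hv)
  have hw₂ : x ^ (t - 1) ∣ coeff 2 (u ^ t * v) := (pow_dvd_pow x (by omega)).trans (hw 2)
  have hw₃ : x ^ (t - 2) ∣ coeff 3 (u ^ t * v) := (pow_dvd_pow x (by omega)).trans (hw 3)
  have hA₁ : x ^ (t - 2) ∣ coeff 1 A - x ^ (r + 1) * coeff 2 A := by
    convert dvd_sub hw₃ ((pow_dvd_pow x (by omega)).trans h₃) using 1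
    ring
  have hA₀ : x ^ (t - 1) ∣ constantCoeff A := by
    have e : constantCoeff A = coeff 2 (u ^ t * v)
        + x ^ (r + 1) * (coeff 1 A - x ^ (r + 1) * coeff 2 A) + x ^ (2 * r + 2) * coeff 2 A
        - (coeff 2 (u ^ t * v) - constantCoeff A + x ^ (r + 1) * coeff 1 A) := by
      ring
    have hx₁ : x ^ (t - 1) ∣ x ^ (r + 1) * x ^ (t - 2) := by
      rw [← pow_add]; exact pow_dvd_pow x (by omega)
    have hx₂ : x ^ (t - 1) ∣ x ^ (2 * r + 2) := pow_dvd_pow x (by omega)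
    rw [e]
    exact dvd_sub (dvd_add (dvd_add hw₂ (hx₁.trans (mul_dvd_mul_left _ hA₁)))
      (hx₂.mul_right _)) ((pow_dvd_pow x (by omega)).trans h₂)
  have hK₀ : x ^ s ∣ constantCoeff (u ^ t * v) := by
    have e : x ^ (2 * r + 2) * x ^ (t - 1) = x ^ s := by rw [← pow_add]; congr 1; omega
    have hZA := e ▸ mul_dvd_mul (dvd_mul_right (x ^ (2 * r + 2)) (constantCoeff Z)) hA₀
    simpa using dvd_sub h₀ hZA
  rw [map_mul, map_pow, hu, mul_pow, mul_assoc, hs, add_assoc] at hK₀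
  exact (hp.pow t).dvd_mul_left.mp (pow_dvd_of_pow_add_dvd_pow_mul X_ne_zero hK₀)

theorem X_pow_dvd_sub_mul_coeff_one (hrt : r + 1 ≤ t) (ht : t ≤ 2 * r + 1)
    (hu : constantCoeff u = x * p) (hv : x ^ (2 * r + 1) ∣ constantCoeff v)
    (h : x ^ t ∣ coeff 1 (v ^ 2 - u ^ (r + 1) * v - W * u ^ (2 * r + 2)) + x ^ (r + 1) * a) :
    x ^ (t - r - 1) ∣ a - p ^ (r + 1) * coeff 1 v := by
  have hu₁ := hasWeight_one (hu ▸ dvd_mul_right x p)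
  have hV : HasWeight x (2 * r + 2) (W * u ^ (2 * r + 2)) := by
    simpa using (hasWeight_zero W).mul (hu₁.pow (2 * r + 2))
  have hvt : x ^ t ∣ constantCoeff v := (pow_dvd_pow x ht).trans hv
  have hE : x ^ t ∣ 2 * constantCoeff v * coeff 1 v - coeff 1 (u ^ (r + 1)) * constantCoeff v
      - coeff 1 (W * u ^ (2 * r + 2)) :=
    dvd_sub (dvd_sub ((hvt.mul_left 2).mul_right _) (hvt.mul_left _))
      ((pow_dvd_pow x (by omega)).trans (hV 1))
  have key : x ^ ((r + 1) + (t - r - 1)) ∣ x ^ (r + 1) * (a - p ^ (r + 1) * coeff 1 v) := by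
    rw [show r + 1 + (t - r - 1) = t by omega]
    convert dvd_sub h hE using 1
    rw [map_sub, map_sub, pow_two v, coeff_one_mul, coeff_one_mul (u ^ (r + 1)),
      map_pow constantCoeff, hu]
    ring
  exact pow_dvd_of_pow_add_dvd_pow_mul X_ne_zero key

theorem X_pow_dvd_sub_coeff_one_sq (hrt : r + 1 ≤ t) (hu : constantCoeff u = x * p)
    (hv : x ^ (2 * r + 1) ∣ constantCoeff v) {a₁ : K⟦X⟧}
    (h : x ^ t ∣ coeff 2 (v ^ 2 - u ^ (r + 1) * v - W * u ^ (2 * r + 2)) - a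
      + x ^ (r + 1) * a₁) :
    x ^ r ∣ a - coeff 1 v ^ 2 := by
  have hu₁ := hasWeight_one (hu ▸ dvd_mul_right x p)
  have hUv : HasWeight x (r + 2) (u ^ (r + 1) * v) := by
    simpa using (hu₁.pow (r + 1)).mul (hasWeight_one ((dvd_pow_self x (by omega)).trans hv))
  have hV : HasWeight x (2 * r + 2) (W * u ^ (2 * r + 2)) := by
    simpa using (hasWeight_zero W).mul (hu₁.pow (2 * r + 2))
  have e : a - coeff 1 v ^ 2 = 2 * constantCoeff v * coeff 2 v - coeff 2 (u ^ (r + 1) * v)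
      - coeff 2 (W * u ^ (2 * r + 2)) + x ^ (r + 1) * a₁
      - (coeff 2 (v ^ 2 - u ^ (r + 1) * v - W * u ^ (2 * r + 2)) - a + x ^ (r + 1) * a₁) := by
    rw [map_sub, map_sub, pow_two v, coeff_two_mul v v]
    ring
  rw [e]
  refine dvd_sub (dvd_add (dvd_sub (dvd_sub ?_ ?_) ?_) ?_) ((pow_dvd_pow x (by omega)).trans h)
  · exact (((pow_dvd_pow x (by omega)).trans hv).mul_left 2).mul_right _
  · exact (pow_dvd_pow x (by omega)).trans (hUv 2)
  · exact (pow_dvd_pow x (by omega)).trans (hV 2)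
  · exact (pow_dvd_pow x (by omega)).trans (dvd_mul_right _ _)

theorem X_pow_dvd_mul_sub_mul (hs : s = t + 2 * r + 1) (hrt : r + 1 ≤ t)
    (hu : constantCoeff u = x * p) (hv : x ^ (2 * r + 1) ∣ constantCoeff v)
    (h : x ^ s ∣ constantCoeff (v ^ 2 - u ^ (r + 1) * v - W * u ^ (2 * r + 2))
      + x ^ (2 * r + 2) * constantCoeff Z * a) :
    x ^ r ∣ constantCoeff Z * a - constantCoeff W * p ^ (2 * r + 2) := by
  obtain ⟨c, hc⟩ := hv
  have key : x ^ ((2 * r + 2) + (t - 1)) ∣ x ^ (2 * r + 2) *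
      (constantCoeff Z * a - constantCoeff W * p ^ (2 * r + 2)
        + x ^ r * (x ^ r * c ^ 2 - p ^ (r + 1) * c)) := by
    rw [show 2 * r + 2 + (t - 1) = s by omega]
    convert h using 1
    simp only [map_sub, map_mul, map_pow, hu, hc]
    ring
  have := (pow_dvd_pow x (by omega : r ≤ t - 1)).trans
    (pow_dvd_of_pow_add_dvd_pow_mul X_ne_zero key)
  exact (dvd_add_left (dvd_mul_right _ _)).mp this

theorem X_pow_dvd_constantCoeff_sub (hs : s = t + 2 * r + 1) (hrt : r + 1 ≤ t)
    (ht : t ≤ 2 * r + 1) (hu : constantCoeff u = x * p) (hp : IsUnit p)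
    (hv : x ∣ constantCoeff v) (hv₁ : IsUnit (coeff 1 v))
    (hG : v ^ 2 - u ^ (r + 1) * v - W * u ^ (2 * r + 2) ∈ twoVarIdeal x s t r (2 * r + 2) Z)
    (hK : u ^ t * v ∈ twoVarIdeal x s t r (2 * r + 2) Z) :
    x ^ (t - r - 1) ∣ constantCoeff Z - constantCoeff W := by
  have hv' := X_pow_dvd_constantCoeff_of_pow_mul_mem hs hrt ht hu hp hv hK
  obtain ⟨A, h₀, h₁, h⟩ := exists_coeff_dvd_of_mem_twoVarIdeal (by omega) (by omega) hG
  have h₂ := h 0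
  simp only [zero_add, coeff_zero_eq_constantCoeff_apply] at h₂
  have hle : x ^ (t - r - 1) ∣ x ^ r := pow_dvd_pow x (by omega)
  have hA₁ := X_pow_dvd_sub_mul_coeff_one hrt ht hu hv' h₁
  have hA₂ := hle.trans (X_pow_dvd_sub_coeff_one_sq hrt hu hv' h₂)
  have hA₀ := hle.trans (X_pow_dvd_mul_sub_mul hs hrt hu hv' h₀)
  have hv₁p : x ^ (t - r - 1) ∣ coeff 1 v - p ^ (r + 1) := by
    refine hv₁.dvd_mul_left.mp ?_
    convert dvd_sub hA₁ hA₂ using 1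
    ring
  refine (hp.pow (2 * r + 2)).dvd_mul_left.mp ?_
  convert dvd_sub (dvd_sub hA₀ (hA₁.mul_right (constantCoeff Z)))
    ((hv₁p.mul_left (p ^ (r + 1))).mul_right (constantCoeff Z)) using 1
  ring

end Estimates

end PowerSeries

section Reduction

open MvPowerSeries

variable {K : Type*} [Field K] {n s t p : ℕ} {w : MvPowerSeries (Fin (n + 2)) K}
  {y : Fin (n + 2) → MvPowerSeries (Fin (n + 2)) K}

local notation "x" => (PowerSeries.X : PowerSeries K)

def twoVars (n : ℕ) : Option Unit ↪ Fin (n + 2) :=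
  ⟨fun o => o.elim 1 fun _ => 0, by rintro (_ | _) (_ | _) h <;> simp_all⟩

@[simp]
theorem twoVars_none : twoVars n none = 1 := rfl

@[simp]
theorem twoVars_some (u : Unit) : twoVars n (some u) = 0 := rfl

/-- Sets `x₃ = ⋯ = x_h = 0`; the outer variable is `x₂ = X 1`, the inner one `x₁ = X 0`. -/
noncomputable def toTwoVars :
    MvPowerSeries (Fin (n + 2)) K →ₐ[K] PowerSeries (PowerSeries K) :=
  (optionEquivLeft Unit K).toAlgHom.comp (killCompl (twoVars n))

theorem toTwoVars_X_zero : toTwoVars (X (0 : Fin (n + 2))) = PowerSeries.C x := by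
  show optionEquivLeft Unit K (killCompl (twoVars n) (X (twoVars n (some ())))) = _
  rw [killCompl_X, optionEquivLeft_X_some]
  rfl

theorem toTwoVars_X_one :
    toTwoVars (X (1 : Fin (n + 2))) = (PowerSeries.X : PowerSeries (PowerSeries K)) := by
  show optionEquivLeft Unit K (killCompl (twoVars n) (X (twoVars n none))) = _
  rw [killCompl_X, optionEquivLeft_X_none]

theorem toTwoVars_X_of_two_le {j : Fin (n + 2)} (hj : 2 ≤ (j : ℕ)) :
    toTwoVars (X j : MvPowerSeries (Fin (n + 2)) K) = 0 := by
  show optionEquivLeft Unit K (killCompl (twoVars n) (X j)) = _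
  rw [killCompl_X_eq_zero, map_zero]
  rintro ⟨(_ | _), rfl⟩ <;> simp at hj

theorem coeff_coeff_toTwoVars (f : MvPowerSeries (Fin (n + 2)) K) (m k : ℕ) :
    PowerSeries.coeff m (PowerSeries.coeff k (toTwoVars f)) =
      coeff (Finsupp.single 0 m + Finsupp.single 1 k) f := by
  rw [← PowerSeries.coeff_coeToMvPowerSeries]
  show coeff _ (PowerSeries.coeff k (optionEquivLeft Unit K (killCompl (twoVars n) f))) = _
  rw [coeff_coeff_optionEquivLeft, coeff_killCompl]
  have : (Finsupp.single () m).optionElim k =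
      Finsupp.single none k + Finsupp.single (some ()) m := by
    ext (_ | _) <;> simp
  rw [this, Finsupp.embDomain_add, Finsupp.embDomain_single, Finsupp.embDomain_single,
    twoVars_none, twoVars_some, add_comm (Finsupp.single 1 k)]

theorem constantCoeff_constantCoeff_toTwoVars (f : MvPowerSeries (Fin (n + 2)) K) :
    PowerSeries.constantCoeff (PowerSeries.constantCoeff (toTwoVars f)) = constantCoeff f := by
  simpa using coeff_coeff_toTwoVars f 0 0

theorem coeff_one_constantCoeff_toTwoVars (f : MvPowerSeries (Fin (n + 2)) K) :
    PowerSeries.coeff 1 (PowerSeries.constantCoeff (toTwoVars f)) =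
      coeff (Finsupp.single 0 1) f := by
  simpa using coeff_coeff_toTwoVars f 1 0

theorem constantCoeff_coeff_one_toTwoVars (f : MvPowerSeries (Fin (n + 2)) K) :
    PowerSeries.constantCoeff (PowerSeries.coeff 1 (toTwoVars f)) =
      coeff (Finsupp.single 1 1) f := by
  simpa using coeff_coeff_toTwoVars f 0 1

theorem two_le_of_ne_zero_of_ne_one {i : Fin (n + 2)} (h₀ : i ≠ 0) (h₁ : i ≠ 1) :
    2 ≤ (i : ℕ) := by
  rw [Ne, Fin.ext_iff, Fin.val_zero] at h₀
  rw [Ne, Fin.ext_iff, Fin.val_one] at h₁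
  omega

theorem two_le_of_lt_of_ne {i j : Fin (n + 2)} (hij : i < j) (hne : (i, j) ≠ (0, 1)) :
    2 ≤ (j : ℕ) := by
  refine two_le_of_ne_zero_of_ne_one (ne_bot_of_gt hij) fun hj => hne ?_
  subst hj
  rw [(Fin.lt_one_iff i).mp hij]

theorem toTwoVars_mem_twoVarIdeal {z f : MvPowerSeries (Fin (n + 2)) K}
    (hf : f ∈ Ipz K n s t p z) :
    toTwoVars f ∈ PowerSeries.twoVarIdeal x s t p (s - t + 1) (toTwoVars z) := by
  rw [Ipz, Iy] at hf
  refine Ideal.mem_comap.mp ((Ideal.span_le.mpr ?_ : _ ≤ Ideal.comap toTwoVars _) hf)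
  rintro f ((⟨i, j, hij, hne, rfl⟩ | ⟨j, hj, rfl⟩) | rfl | rfl) <;>
    simp only [SetLike.mem_coe, Ideal.mem_comap, map_mul, map_sub, map_pow]
  · rw [toTwoVars_X_of_two_le (two_le_of_lt_of_ne hij hne), mul_zero]
    exact zero_mem _
  · rw [toTwoVars_X_of_two_le hj, toTwoVars_X_zero, zero_pow two_ne_zero, zero_sub, ← map_pow]
    exact neg_mem (Ideal.subset_span (by simp))
  · rw [toTwoVars_X_zero, toTwoVars_X_one, ← map_pow, ← map_pow]
    exact Ideal.subset_span (Set.mem_insert _ _)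
  · rw [toTwoVars_X_zero, toTwoVars_X_one, ← map_pow]
    exact Ideal.subset_span (by simp)

theorem mul_mem_Iy {i j : Fin (n + 2)} (hij : i < j) (hne : (i, j) ≠ (0, 1)) :
    y i * y j ∈ Iy K n s t p w y :=
  Ideal.subset_span (Or.inl (Or.inl ⟨i, j, hij, hne, rfl⟩))

theorem sq_sub_pow_mem_Iy {j : Fin (n + 2)} (hj : 2 ≤ (j : ℕ)) :
    y j ^ 2 - y 0 ^ s ∈ Iy K n s t p w y :=
  Ideal.subset_span (Or.inl (Or.inr ⟨j, hj, rfl⟩))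

theorem quadric_mem_Iy :
    y 1 ^ 2 - y 0 ^ (p + 1) * y 1 - w * y 0 ^ (s - t + 1) ∈ Iy K n s t p w y :=
  Ideal.subset_span (Or.inr (Or.inl rfl))

theorem pow_mul_mem_Iy : y 0 ^ t * y 1 ∈ Iy K n s t p w y :=
  Ideal.subset_span (Or.inr (Or.inr rfl))

theorem mem_span_X_pow_add_offIdeal {T : ℕ} {f : MvPowerSeries (Fin (n + 2)) K}
    (h : x ^ T ∣ PowerSeries.constantCoeff (toTwoVars f)) :
    f ∈ Ideal.span {(X 0 : MvPowerSeries (Fin (n + 2)) K) ^ T} + offIdeal K n := by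
  classical
  let g : MvPowerSeries (Fin (n + 2)) K := fun d => if d 0 < T then coeff d f else 0
  have hg : ∀ d, coeff d g = if d 0 < T then coeff d f else 0 := fun _ => rfl
  have hfg : X 0 ^ T ∣ f - g := X_pow_dvd_iff.mpr fun d hd => by simp [hg, hd]
  have hg_off : g ∈ offIdeal K n := by
    refine Ideal.span_mono ?_
      (mem_span_X_image_of_coeff_eq_zero_s16 (Finset.univ.erase 0) fun d hd => ?_)
    · rintro _ ⟨i, hi, rfl⟩
      exact ⟨i, Finset.ne_of_mem_erase hi, rfl⟩
    have hd : d = Finsupp.single 0 (d 0) := by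
      ext i
      by_cases hi : i = 0
      · simp [hi]
      · rw [hd i (Finset.mem_erase.mpr ⟨hi, Finset.mem_univ i⟩), Finsupp.single_eq_of_ne hi]
    rw [hg]
    split_ifs with hT
    · rw [hd, ← add_zero (Finsupp.single _ _), ← Finsupp.single_zero 1,
        ← coeff_coeff_toTwoVars]
      simpa using PowerSeries.X_pow_dvd_iff.mp h _ hT
    · rfl
  rw [← sub_add_cancel f g]
  exact Submodule.add_mem_sup (Ideal.mem_span_singleton.mpr hfg) hg_off

theorem X_dvd_constantCoeff_toTwoVars (hy : Ideal.span (Set.range y) = nIdeal K (n + 2))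
    (i : Fin (n + 2)) : x ∣ PowerSeries.constantCoeff (toTwoVars (y i)) := by
  rw [PowerSeries.X_dvd_iff, constantCoeff_constantCoeff_toTwoVars]
  exact constantCoeff_eq_zero_of_span_eq hy i

theorem X_sq_dvd_constantCoeff_toTwoVars (hy : Ideal.span (Set.range y) = nIdeal K (n + 2))
    (hp : 1 ≤ p) (hs : 3 ≤ s) (he : 3 ≤ s - t + 1) {J : Ideal (PowerSeries (PowerSeries K))}
    (hJ : ∀ F ∈ J, x ^ 3 ∣ PowerSeries.constantCoeff F)
    (hI : ∀ f ∈ Iy K n s t p w y, toTwoVars f ∈ J) {i : Fin (n + 2)} (hi : i ≠ 0) :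
    x ^ 2 ∣ PowerSeries.constantCoeff (toTwoVars (y i)) := by
  have hu : ∀ m, x ^ m ∣ PowerSeries.constantCoeff (toTwoVars (y 0)) ^ m :=
    fun m => pow_dvd_pow_of_dvd (X_dvd_constantCoeff_toTwoVars hy 0) m
  refine PowerSeries.X_sq_dvd_of_X_pow_three_dvd_sq ?_
  by_cases h₁ : i = 1
  · subst h₁
    have h := hJ _ (hI _ quadric_mem_Iy)
    simp only [map_sub, map_mul, map_pow] at h
    rw [sub_sub] at h
    have hv : x ^ (p + 1 + 1) ∣ PowerSeries.constantCoeff (toTwoVars (y 0)) ^ (p + 1) *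
        PowerSeries.constantCoeff (toTwoVars (y 1)) := by
      rw [pow_succ]
      exact mul_dvd_mul (hu _) (X_dvd_constantCoeff_toTwoVars hy 1)
    exact (dvd_sub_left (dvd_add ((pow_dvd_pow x (by omega)).trans hv)
      (((pow_dvd_pow x he).trans (hu _)).mul_left _))).mp h
  · have h := hJ _ (hI _ (sq_sub_pow_mem_Iy (two_le_of_ne_zero_of_ne_one hi h₁)))
    simp only [map_sub, map_pow] at h
    exact (dvd_sub_left ((pow_dvd_pow x hs).trans (hu s))).mp h

theorem exists_isUnit_toTwoVars_of_span_eq (hy : Ideal.span (Set.range y) = nIdeal K (n + 2))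
    (hp : 1 ≤ p) (hs : 3 ≤ s) (he : 3 ≤ s - t + 1) {J : Ideal (PowerSeries (PowerSeries K))}
    (hJ₀ : ∀ F ∈ J, x ^ 3 ∣ PowerSeries.constantCoeff F)
    (hJ₁ : ∀ F ∈ J, x ^ 2 ∣ PowerSeries.coeff 1 F)
    (hI : ∀ f ∈ Iy K n s t p w y, toTwoVars f ∈ J) :
    ∃ q, PowerSeries.constantCoeff (toTwoVars (y 0)) = x * q ∧ IsUnit q ∧
      x ∣ PowerSeries.constantCoeff (toTwoVars (y 1)) ∧
      IsUnit (PowerSeries.coeff 1 (toTwoVars (y 1))) := by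
  have hsq := fun i (hi : i ≠ 0) => X_sq_dvd_constantCoeff_toTwoVars hy hp hs he hJ₀ hI hi
  have ha : ∀ i ≠ 0, coeff (Finsupp.single 0 1) (y i) = 0 := fun i hi => by
    rw [← coeff_one_constantCoeff_toTwoVars]
    exact PowerSeries.X_pow_dvd_iff.mp (hsq i hi) 1 one_lt_two
  obtain ⟨q, hu, hq⟩ := PowerSeries.exists_X_mul_of_coeff_one_ne_zero
    (X_dvd_constantCoeff_toTwoVars hy 0)
    (by rw [coeff_one_constantCoeff_toTwoVars]; exact coeff_single_ne_zero_of_span_eq hy ha)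
  have hb : ∀ j, j ≠ 0 → j ≠ 1 → coeff (Finsupp.single 1 1) (y j) = 0 := by
    intro j hj₀ hj₁
    have h := hJ₁ _ (hI _ (mul_mem_Iy (Fin.pos_iff_ne_zero.mpr hj₀)
      fun h => hj₁ (Prod.ext_iff.mp h).2))
    rw [map_mul, PowerSeries.coeff_one_mul, hu, add_comm] at h
    have h' : x ^ (1 + 1) ∣ x ^ 1 * (q * PowerSeries.coeff 1 (toTwoVars (y j))) := by
      convert (dvd_add_left ((hsq j hj₀).mul_left _)).mp h using 1; ring
    rw [← constantCoeff_coeff_one_toTwoVars, ← PowerSeries.X_dvd_iff]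
    exact hq.dvd_mul_left.mp
      (pow_one x ▸ pow_dvd_of_pow_add_dvd_pow_mul PowerSeries.X_ne_zero h')
  refine ⟨q, hu, hq, X_dvd_constantCoeff_toTwoVars hy 1,
    PowerSeries.isUnit_iff_constantCoeff.mpr (isUnit_iff_ne_zero.mpr ?_)⟩
  rw [constantCoeff_coeff_one_toTwoVars]
  exact coeff_single_ne_zero_of_span_eq_of_triangular hy zero_ne_one ha hb

end Reduction

open MvPowerSeries in
theorem stmt_16_general {k : Type*} [Field k] (n s t : ℕ)
    (h2t : 2 * t ≤ s)
    (r : ℕ) (hr1 : 1 ≤ r) (hr2 : r ≤ t - 2) (hr3 : 2 * (r + 1) = s - t + 1)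
    (z w : MvPowerSeries (Fin (n + 2)) k)
    (y : Fin (n + 2) → MvPowerSeries (Fin (n + 2)) k)
    (hy : Ideal.span (Set.range y) = nIdeal k (n + 2))
    (φ : MvPowerSeries (Fin (n + 2)) k ≃ₐ[k] MvPowerSeries (Fin (n + 2)) k)
    (heq : Ipz k n s t r z = Iy k n s t r (φ w) y) :
    z - φ w ∈
      Ideal.span {(X 0 : MvPowerSeries (Fin (n + 2)) k) ^ (t - r - 1)} + offIdeal k n := by
  have hs : s = t + 2 * r + 1 := by omega
  have he : s - t + 1 = 2 * r + 2 := by omega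
  have hI : ∀ f ∈ Iy k n s t r (φ w) y, toTwoVars f ∈
      PowerSeries.twoVarIdeal PowerSeries.X s t r (2 * r + 2) (toTwoVars z) :=
    fun f hf => he ▸ toTwoVars_mem_twoVarIdeal (heq ▸ hf)
  obtain ⟨q, hu, hq, hv, hv₁⟩ := exists_isUnit_toTwoVars_of_span_eq hy hr1 (by omega) (by omega)
    (fun _ => PowerSeries.X_pow_three_dvd_constantCoeff_of_mem (by omega) (by omega) (by omega)
      (by omega))
    (fun _ => PowerSeries.X_sq_dvd_coeff_one_of_mem (by omega) (by omega) (by omega) hr1) hI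
  have hG := hI _ quadric_mem_Iy
  rw [he] at hG
  refine mem_span_X_pow_add_offIdeal ?_
  rw [map_sub, map_sub]
  refine PowerSeries.X_pow_dvd_constantCoeff_sub hs (by omega) (by omega) hu hq hv hv₁ ?_ ?_
  · simpa using hG
  · simpa using hI _ pow_mul_mem_Iy

open MvPowerSeries in
/-- If `s ≥ 2t`, `1 ≤ r ≤ t - 2`, `2(r+1) = s - t + 1` and `I_{r,z} = φ_y(I_{r,w})` for a
system of generators `y₁,…,y_h` of `n`, then `z - φ_y(w) ∈ (x₁^{t-r-1}) + (x₂,…,x_h)`. -/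
theorem stmt_16 {k : Type*} [Field k] [IsAlgClosed k] [CharZero k] (n s t : ℕ)
    (hst : t + 1 ≤ s) (ht : 3 ≤ t + 1) (h2t : 2 * t ≤ s)
    (r : ℕ) (hr1 : 1 ≤ r) (hr2 : r ≤ t - 2) (hr3 : 2 * (r + 1) = s - t + 1)
    (z w : MvPowerSeries (Fin (n + 2)) k) (hz : IsUnit z) (hw : IsUnit w)
    (y : Fin (n + 2) → MvPowerSeries (Fin (n + 2)) k)
    (hy : Ideal.span (Set.range y) = nIdeal k (n + 2))
    (φ : MvPowerSeries (Fin (n + 2)) k ≃ₐ[k] MvPowerSeries (Fin (n + 2)) k)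
    (hφ : ∀ i, φ (X i) = y i)
    (heq : Ipz k n s t r z = Iy k n s t r (φ w) y) :
    z - φ w ∈
      Ideal.span {(X 0 : MvPowerSeries (Fin (n + 2)) k) ^ (t - r - 1)} + offIdeal k n :=
  stmt_16_general n s t h2t r hr1 hr2 hr3 z w y hy φ heq
end
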